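/- arXiv:2007.11131 — 11 statements merged into one kernel-verified Lean document; each statement's English description precedes it below -/
import Mathlib

section
/- Let V be a finite set, E ⊆ V × V an acyclic relation, and B ∈ ℝ^{V×V} supported on E. If u ∉ An(v) (i.e., u ≠ v and there is no directed path in E from u to v), then [(I − B)^{-1}]_{vu} = 0. -/
/-!
Row `v` of `(1 - B) * C = 1` says `C v u = ∑ w, B v w * C w u` for `u ≠ v`, and `B v w ≠ 0` only
for edges `w → v`. So if `C w u = 0` for every predecessor `w` of `v` not reachable from `u`, the
same holds at `v`; acyclicity on a finite vertex set makes reachability well founded, so this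
induction covers every `v`. When `1 - B` is not invertible, Mathlib's `⁻¹` is `0` anyway.
-/

open Matrix

theorem Relation.wellFounded_transGen_of_irrefl {V : Type*} [Finite V] {r : V → V → Prop}
    (h : ∀ v, ¬ Relation.TransGen r v v) : WellFounded (Relation.TransGen r) :=
  haveI : IsTrans V (Relation.TransGen r) := ⟨fun _ _ _ => Relation.TransGen.trans⟩
  haveI : Std.Irrefl (Relation.TransGen r) := ⟨h⟩
  Finite.wellFounded_of_trans_of_irrefl _

namespace Matrix

variable {n R : Type*} [Fintype n] [DecidableEq n] [Ring R]

theorem apply_eq_sum_of_one_sub_mul_eq_one {B C : Matrix n n R} (h : (1 - B) * C = 1)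
    {u v : n} (hne : u ≠ v) : C v u = ∑ w, B v w * C w u := by
  have hvu := congrFun₂ h v u
  rwa [sub_mul, one_mul, sub_apply, one_apply_ne hne.symm, mul_apply, sub_eq_zero] at hvu

theorem apply_eq_zero_of_one_sub_mul_eq_one_of_not_transGen {r : n → n → Prop}
    (hacyc : ∀ v, ¬ Relation.TransGen r v v) {B C : Matrix n n R}
    (hsupp : ∀ u v, B v u ≠ 0 → r u v) (h : (1 - B) * C = 1) {u : n} :
    ∀ v, u ≠ v → ¬ Relation.TransGen r u v → C v u = 0 := by
  intro v
  induction v using (Relation.wellFounded_transGen_of_irrefl hacyc).induction with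
  | _ v ih =>
    intro hne hnot
    rw [apply_eq_sum_of_one_sub_mul_eq_one h hne]
    refine Finset.sum_eq_zero fun w _ => ?_
    by_cases hB : B v w = 0
    · rw [hB, zero_mul]
    have hwv : Relation.TransGen r w v := .single (hsupp w v hB)
    have hwu : u ≠ w := by rintro rfl; exact hnot hwv
    rw [ih w hwv hwu fun huw => hnot (huw.trans hwv), mul_zero]

end Matrix

/-- For `B` supported on an acyclic relation, if `u ∉ An(v)`
(i.e. `u ≠ v` and there is no directed path from `u` to `v`, the latter being
equivalent to `¬ Relation.TransGen r u v`), then `[(I − B)⁻¹]_{vu} = 0`. -/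
theorem stmt_2 {V : Type*} [Fintype V] [DecidableEq V]
    (r : V → V → Prop) (hacyc : ∀ v : V, ¬ Relation.TransGen r v v)
    (B : Matrix V V ℝ) (hsupp : ∀ u v : V, B v u ≠ 0 → r u v)
    (u v : V) (hne : u ≠ v) (hnan : ¬ Relation.TransGen r u v) :
    (1 - B)⁻¹ v u = 0 := by
  by_cases hdet : IsUnit (1 - B).det
  · exact apply_eq_zero_of_one_sub_mul_eq_one_of_not_transGen hacyc hsupp
      (mul_nonsing_inv _ hdet) v hne hnan
  · rw [nonsing_inv_apply_not_isUnit _ hdet, Matrix.zero_apply]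
end

section
/- Let G = (V, E) be a finite directed acyclic graph and let u, v ∈ V with u ∈ an(v). For β ∈ ℝ^E define B(β) ∈ ℝ^{V×V} by B(β)_{wz} = β_{(z,w)} if (z,w) ∈ E and 0 otherwise. Then the set {β ∈ ℝ^E : [(I − B(β))^{-1}]_{vu} = 0} has Lebesgue measure zero in ℝ^E. -/
open Matrix MeasureTheory

/-- The matrix `B(β)` with `B(β)_{wz} = β_{(z,w)}` if `(z,w) ∈ E` and `0` otherwise. -/
noncomputable def edgeMatrix {V : Type*} [DecidableEq V] (E : Finset (V × V))
    (β : ↥E → ℝ) : Matrix V V ℝ :=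
  fun w z => if h : (z, w) ∈ E then β ⟨(z, w), h⟩ else 0

/-!
Since `E` is acyclic, every `B(β)` is nilpotent with `B(β) ^ |V| = 0`, so
`(I - B(β))⁻¹ = ∑_{k < |V|} B(β) ^ k` and the entry `vu` is a polynomial in `β`. Evaluated at
`β ≡ 1` it is a sum of nonnegative path counts, one of which is positive because `u ∈ an(v)`;
so the polynomial is nonzero, and the zero set of a nonzero real polynomial is Lebesgue-null
(induction on the number of variables and Fubini).
-/

namespace MvPolynomial

theorem volume_setOf_eval_eq_zero_option {σ : Type*} [Fintype σ]
    (ih : ∀ p : MvPolynomial σ ℝ, p ≠ 0 → volume {x : σ → ℝ | eval x p = 0} = 0)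
    {p : MvPolynomial (Option σ) ℝ} (hp : p ≠ 0) :
    volume {x : Option σ → ℝ | eval x p = 0} = 0 := by
  set q := optionEquivLeft ℝ σ p
  have hq : q.leadingCoeff ≠ 0 := Polynomial.leadingCoeff_ne_zero.mpr <|
    (map_ne_zero_iff _ (optionEquivLeft ℝ σ).injective).mpr hp
  have hslice : ∀ᵐ s : σ → ℝ, q.map (eval s) ≠ 0 := by
    refine measure_mono_null (fun s hs => ?_) (ih _ hq)
    simpa [Polynomial.coeff_map] using congrArg (Polynomial.coeff · q.natDegree) (not_not.mp hs)
  let e := MeasurableEquiv.piOptionEquivProd (fun _ : Option σ => ℝ)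
  have hmeas : MeasurableSet {x : Option σ → ℝ | eval x p = 0} :=
    (isClosed_eq (continuous_eval p) continuous_const).measurableSet
  rw [volume_pi, ← Measure.pi_map_piOptionEquivProd, Measure.map_apply e.symm.measurable hmeas,
    Measure.measure_prod_null (e.symm.measurable hmeas)]
  -- Fubini: for a.e. `s` the slice is the finite root set of a nonzero polynomial in one variable.
  filter_upwards [hslice] with s hs
  have hslice_eq :
      Prod.mk s ⁻¹' (e.symm ⁻¹' {x | eval x p = 0}) = {y | (q.map (eval s)).IsRoot y} := by
    ext y
    have he : e.symm (s, y) = fun i => i.elim y s := by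
      ext (_ | i) <;> rfl
    rw [Set.mem_preimage, Set.mem_preimage, Set.mem_ofPred, Set.mem_ofPred, he,
      Polynomial.IsRoot.def, ← optionEquivLeft_elim_eval]
  rw [hslice_eq]
  exact (Polynomial.finite_setOfPred_isRoot hs).measure_zero _

theorem volume_setOf_eval_eq_zero_of_equiv {σ τ : Type*} [Fintype σ] [Fintype τ] (e : σ ≃ τ)
    (h : ∀ p : MvPolynomial σ ℝ, p ≠ 0 → volume {x : σ → ℝ | eval x p = 0} = 0)
    {p : MvPolynomial τ ℝ} (hp : p ≠ 0) :
    volume {x : τ → ℝ | eval x p = 0} = 0 := by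
  have hp' : rename e.symm p ≠ 0 :=
    (map_ne_zero_iff _ (rename_injective _ e.symm.injective)).mpr hp
  have hpre : {x : τ → ℝ | eval x p = 0} =
      MeasurableEquiv.piCongrLeft (fun _ => ℝ) e.symm ⁻¹' {x | eval x (rename e.symm p) = 0} := by
    ext x
    have hx : MeasurableEquiv.piCongrLeft (fun _ => ℝ) e.symm x ∘ e.symm = x :=
      _root_.funext (Equiv.piCongrLeft_apply_apply (fun _ => ℝ) e.symm x)
    simp only [Set.mem_preimage, Set.mem_ofPred, eval_rename, hx]
  rw [hpre, (volume_measurePreserving_piCongrLeft (fun _ => ℝ) e.symm).measure_preimage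
    (isClosed_eq (continuous_eval _) continuous_const).nullMeasurableSet]
  exact h _ hp'

theorem volume_setOf_eval_eq_zero_of_isEmpty {σ : Type*} [Fintype σ] [IsEmpty σ]
    {p : MvPolynomial σ ℝ} (hp : p ≠ 0) :
    volume {x : σ → ℝ | eval x p = 0} = 0 := by
  obtain ⟨a, rfl⟩ := C_surjective σ p
  simp_all

theorem volume_setOf_eval_eq_zero {σ : Type*} [Fintype σ] {p : MvPolynomial σ ℝ} (hp : p ≠ 0) :
    volume {x : σ → ℝ | eval x p = 0} = 0 := by
  refine Fintype.induction_empty_option (P := fun σ _ => ∀ p : MvPolynomial σ ℝ, p ≠ 0 →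
    volume {x : σ → ℝ | eval x p = 0} = 0) ?_ ?_ ?_ σ p hp
  · intro σ τ _ e ih
    let := Fintype.ofEquiv τ e.symm
    exact fun _ => volume_setOf_eval_eq_zero_of_equiv e ih
  · exact fun _ => volume_setOf_eval_eq_zero_of_isEmpty
  · intro σ _ ih _
    exact volume_setOf_eval_eq_zero_option ih

end MvPolynomial

namespace Matrix

variable {V R : Type*} [Fintype V] [DecidableEq V]

/-- Each edge `z → y` strictly enlarges the set of ancestors, so a nonzero entry of `A ^ k`
certifies a chain of `k` strict inclusions. -/
theorem add_ncard_le_of_pow_apply_ne_zero [Semiring R] {r : V → V → Prop}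
    (hr : ∀ v, ¬ Relation.TransGen r v v) {A : Matrix V V R} (hA : ∀ w z, A w z ≠ 0 → r z w)
    (k : ℕ) {w z : V} (h : (A ^ k) w z ≠ 0) :
    k + {x | Relation.TransGen r x z}.ncard ≤ {x | Relation.TransGen r x w}.ncard := by
  induction k generalizing z with
  | zero =>
    obtain rfl : w = z := by
      by_contra hwz
      exact h (by rw [pow_zero, one_apply_ne hwz])
    simp
  | succ k ih =>
    rw [pow_succ, mul_apply] at h
    obtain ⟨y, -, hy⟩ := Finset.exists_ne_zero_of_sum_ne_zero h
    have hzy : r z y := hA y z (right_ne_zero_of_mul hy)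
    have hsub : {x | Relation.TransGen r x z} ⊂ {x | Relation.TransGen r x y} :=
      Set.ssubset_iff_of_subset (fun x hx => Relation.TransGen.tail hx hzy) |>.mpr
        ⟨z, Relation.TransGen.single hzy, hr z⟩
    have := Set.ncard_lt_ncard hsub (Set.toFinite _)
    have := ih (left_ne_zero_of_mul hy)
    omega

theorem pow_card_eq_zero_of_acyclic [Semiring R] {r : V → V → Prop}
    (hr : ∀ v, ¬ Relation.TransGen r v v) {A : Matrix V V R} (hA : ∀ w z, A w z ≠ 0 → r z w) :
    A ^ Fintype.card V = 0 := by
  ext w z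
  by_contra h
  have hle := add_ncard_le_of_pow_apply_ne_zero hr hA _ h
  have hlt : {x | Relation.TransGen r x w}.ncard < Fintype.card V := by
    rw [← Nat.card_eq_fintype_card, ← Set.ncard_univ]
    exact Set.ncard_lt_ncard <|
      Set.ssubset_univ_iff.mpr ((Set.ne_univ_iff_exists_notMem _).mpr ⟨w, hr w⟩)
  omega

theorem inv_one_sub_eq_sum_pow [CommRing R] {A : Matrix V V R} {n : ℕ} (hA : A ^ n = 0) :
    (1 - A)⁻¹ = ∑ k ∈ Finset.range n, A ^ k :=
  inv_eq_left_inv (by rw [geom_sum_mul_neg, hA, sub_zero])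

theorem exists_pow_apply_pos_of_transGen [Semiring R] [PartialOrder R] [IsStrictOrderedRing R]
    {r : V → V → Prop} {A : Matrix V V R} (hA : ∀ i j, 0 ≤ A i j)
    (hr : ∀ z w, r z w → 0 < A w z) {u v : V} (h : Relation.TransGen r u v) :
    ∃ k, 0 < (A ^ k) v u := by
  induction h with
  | single h => exact ⟨1, by simpa using hr _ _ h⟩
  | @tail b c _ hbc ih =>
    obtain ⟨k, hk⟩ := ih
    refine ⟨k + 1, ?_⟩
    rw [pow_succ', mul_apply]
    calc 0 < A c b * (A ^ k) b u := mul_pos (hr _ _ hbc) hk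
      _ ≤ ∑ y, A c y * (A ^ k) y u :=
        Finset.single_le_sum (fun y _ => mul_nonneg (hA c y) (pow_apply_nonneg hA k y u))
          (Finset.mem_univ b)

theorem inv_one_sub_apply_pos_of_transGen [CommRing R] [PartialOrder R] [IsStrictOrderedRing R]
    {r : V → V → Prop} (hr : ∀ v, ¬ Relation.TransGen r v v) {A : Matrix V V R}
    (hA : ∀ w z, A w z ≠ 0 → r z w) (hApos : ∀ z w, r z w → 0 < A w z) {u v : V}
    (h : Relation.TransGen r u v) : 0 < (1 - A)⁻¹ v u := by
  have hnonneg : ∀ w z, 0 ≤ A w z := fun w z =>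
    (eq_or_ne (A w z) 0).elim (fun h0 => h0.ge) fun h0 => (hApos _ _ (hA _ _ h0)).le
  have hnil := pow_card_eq_zero_of_acyclic hr hA
  obtain ⟨k, hk⟩ := exists_pow_apply_pos_of_transGen hnonneg hApos h
  have hkn : k < Fintype.card V := by
    by_contra! hkn
    simp [pow_eq_zero_of_le hkn hnil] at hk
  rw [inv_one_sub_eq_sum_pow hnil, sum_apply]
  exact Finset.sum_pos' (fun j _ => pow_apply_nonneg hnonneg j v u)
    ⟨k, Finset.mem_range.mpr hkn, hk⟩

end Matrix

section edgeMatrix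

variable {V : Type*} [DecidableEq V] (E : Finset (V × V))

noncomputable def genericEdgeMatrix : Matrix V V (MvPolynomial ↥E ℝ) :=
  of fun w z => if h : (z, w) ∈ E then MvPolynomial.X ⟨(z, w), h⟩ else 0

theorem map_eval_genericEdgeMatrix (β : ↥E → ℝ) :
    (genericEdgeMatrix E).map (MvPolynomial.eval β) = edgeMatrix E β := by
  ext w z
  simp only [Matrix.map_apply, genericEdgeMatrix, of_apply, edgeMatrix]
  split <;> simp

theorem mem_of_edgeMatrix_apply_ne_zero {β : ↥E → ℝ} {w z : V} (h : edgeMatrix E β w z ≠ 0) :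
    (z, w) ∈ E := by
  by_contra hzw
  exact h (dif_neg hzw)

theorem edgeMatrix_one_apply_pos {z w : V} (h : (z, w) ∈ E) :
    0 < edgeMatrix E (fun _ => 1) w z := by
  simp [edgeMatrix, h]

variable [Fintype V]

noncomputable def inverseEntryPoly (v u : V) : MvPolynomial ↥E ℝ :=
  ∑ k ∈ Finset.range (Fintype.card V), (genericEdgeMatrix E ^ k) v u

variable {E}

theorem eval_inverseEntryPoly (hacyc : ∀ v : V, ¬ Relation.TransGen (fun a b => (a, b) ∈ E) v v)
    (v u : V) (β : ↥E → ℝ) :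
    MvPolynomial.eval β (inverseEntryPoly E v u) = (1 - edgeMatrix E β)⁻¹ v u := by
  have hnil : edgeMatrix E β ^ Fintype.card V = 0 :=
    pow_card_eq_zero_of_acyclic hacyc fun _ _ => mem_of_edgeMatrix_apply_ne_zero E
  rw [inv_one_sub_eq_sum_pow hnil, Matrix.sum_apply, inverseEntryPoly, map_sum,
    ← map_eval_genericEdgeMatrix]
  refine Finset.sum_congr rfl fun k _ => ?_
  rw [← Matrix.map_pow, Matrix.map_apply]

theorem inverseEntryPoly_ne_zero
    (hacyc : ∀ v : V, ¬ Relation.TransGen (fun a b => (a, b) ∈ E) v v)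
    {u v : V} (hu : Relation.TransGen (fun a b => (a, b) ∈ E) u v) :
    inverseEntryPoly E v u ≠ 0 := by
  intro h
  have hpos := inv_one_sub_apply_pos_of_transGen hacyc (fun _ _ => mem_of_edgeMatrix_apply_ne_zero E)
    (fun _ _ => edgeMatrix_one_apply_pos E) hu
  rw [← eval_inverseEntryPoly hacyc, h, map_zero] at hpos
  exact lt_irrefl 0 hpos

end edgeMatrix

/-- For a finite DAG `(V, E)` and `u ∈ an(v)`, the set of edge-weight
vectors `β ∈ ℝ^E` for which `[(I − B(β))⁻¹]_{vu} = 0` has Lebesgue measure zero. -/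
theorem stmt_3 {V : Type*} [Fintype V] [DecidableEq V]
    (E : Finset (V × V))
    (hacyc : ∀ v : V, ¬ Relation.TransGen (fun a b => (a, b) ∈ E) v v)
    (u v : V) (hu : Relation.TransGen (fun a b => (a, b) ∈ E) u v) :
    volume {β : ↥E → ℝ | ((1 - edgeMatrix E β)⁻¹) v u = 0} = 0 := by
  simp_rw [← eval_inverseEntryPoly hacyc]
  exact MvPolynomial.volume_setOf_eval_eq_zero (inverseEntryPoly_ne_zero hacyc hu)
end

section
/- Let V be a finite set, E ⊆ V × V an acyclic relation, and B ∈ ℝ^{V×V} supported on E; write Λ = I − B. Then for any A ⊆ V with complement Ā, the block Λ_{Ā,Ā} and the submatrix (Λ^{-1})_{A,A} are invertible, and [(Λ^{-1})_{A,A}]^{-1} = Λ_{A,A} − Λ_{A,Ā}(Λ_{Ā,Ā})^{-1}Λ_{Ā,A}. Consequently, the marginal direct effects matrix B̃(A) = I − [(Λ^{-1})_{A,A}]^{-1} satisfies, for all distinct u, v ∈ A, B̃(A)_{vu} = B_{vu} + Σ_{s∈Ā} Σ_{t∈Ā} B_{vs} [(Λ_{Ā,Ā})^{-1}]_{st} B_{tu}.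 -/
/-
Order `V` by the number of `r`-ancestors of each vertex: acyclicity makes this height strictly
increase along every edge, so `B` and each of its principal blocks strictly raise the height and
are nilpotent, hence `Λ = 1 - B` and `Λ_{Ā,Ā}` are invertible. Reindexing `V` as `A ⊕ Ā` writes
`Λ` as a 2 × 2 block matrix, whose inverse has top-left block the inverse of the Schur complement
`Λ_{A,A} - Λ_{A,Ā} Λ_{Ā,Ā}⁻¹ Λ_{Ā,A}`. Off the diagonal and off `A × Ā`, the entries of `Λ` are
those of `-B`, which gives the entrywise formula.
-/

open Matrix

/-- The submatrix of `M` with rows indexed by `R` and columns indexed by `C`. -/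
def msub {V : Type*} (M : Matrix V V ℝ) (R C : Finset V) : Matrix ↥R ↥C ℝ :=
  M.submatrix (fun i => (i : V)) (fun j => (j : V))

/-- The marginal direct effects matrix `B̃(A) = I − [((I−B)⁻¹)_{A,A}]⁻¹`. -/
noncomputable def Btilde {V : Type*} [Fintype V] [DecidableEq V]
    (B : Matrix V V ℝ) (A : Finset V) : Matrix ↥A ↥A ℝ :=
  1 - (msub (1 - B)⁻¹ A A)⁻¹

theorem Relation.exists_lt_of_forall_not_transGen_self {V : Type*} [Finite V]
    {r : V → V → Prop} (hacyc : ∀ v : V, ¬ TransGen r v v) :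
    ∃ g : V → ℕ, ∀ a b, r a b → g a < g b := by
  refine ⟨fun v => {x | TransGen r x v}.ncard, fun a b hab => Set.ncard_lt_ncard ?_⟩
  refine ⟨fun x hx => TransGen.tail hx hab, fun hsub => hacyc a ?_⟩
  exact hsub (TransGen.single hab : TransGen r a b)

namespace Matrix

variable {W R : Type*} [Fintype W] [DecidableEq W] [Semiring R]

theorem le_of_pow_apply_ne_zero {M : Matrix W W R} {g : W → ℕ}
    (hg : ∀ u v, M v u ≠ 0 → g u < g v) (k : ℕ) {u v : W} (h : (M ^ k) v u ≠ 0) :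
    g u + k ≤ g v := by
  induction k generalizing v with
  | zero =>
    obtain rfl : v = u := by_contra fun hvu => h (by simp [one_apply_ne hvu])
    simp
  | succ k ih =>
    rw [pow_succ', mul_apply] at h
    obtain ⟨w, -, hw⟩ := Finset.exists_ne_zero_of_sum_ne_zero h
    have := hg w v (left_ne_zero_of_mul hw)
    have := ih (right_ne_zero_of_mul hw)
    omega

theorem isNilpotent_of_apply_ne_zero_lt {M : Matrix W W R} (g : W → ℕ)
    (hg : ∀ u v, M v u ≠ 0 → g u < g v) : IsNilpotent M := by
  refine ⟨Finset.univ.sup g + 1, ext fun v u => by_contra fun h => ?_⟩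
  have := le_of_pow_apply_ne_zero hg _ h
  have := Finset.le_sup (f := g) (Finset.mem_univ v)
  omega

theorem isUnit_schur_and_toBlocks₁₁_inv_eq {m n K : Type*} [Fintype m] [Fintype n]
    [DecidableEq m] [DecidableEq n] [CommRing K] {P : Matrix m m K} {Q : Matrix m n K}
    {R : Matrix n m K} {D : Matrix n n K} (hM : IsUnit (fromBlocks P Q R D)) (hD : IsUnit D) :
    IsUnit (P - Q * D⁻¹ * R) ∧ (fromBlocks P Q R D)⁻¹.toBlocks₁₁ = (P - Q * D⁻¹ * R)⁻¹ := by
  let := hD.invertible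
  let := hM.invertible
  let := invertibleOfFromBlocks₂₂Invertible P Q R D
  rw [← invOf_eq_nonsing_inv D]
  refine ⟨isUnit_of_invertible _, ?_⟩
  rw [← invOf_eq_nonsing_inv, ← invOf_eq_nonsing_inv, invOf_fromBlocks₂₂_eq,
    toBlocks_fromBlocks₁₁]

end Matrix

section Schur

variable {V : Type*} [Fintype V] [DecidableEq V]

def Finset.sumComplEquiv (A : Finset V) : ↥A ⊕ ↥(Aᶜ) ≃ V :=
  (Equiv.sumCongr (Equiv.refl ↥A) (Equiv.subtypeEquivRight fun _ => Finset.mem_compl)).trans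
    (Equiv.sumCompl (· ∈ A))

theorem submatrix_sumComplEquiv (M : Matrix V V ℝ) (A : Finset V) :
    M.submatrix A.sumComplEquiv A.sumComplEquiv =
      fromBlocks (msub M A A) (msub M A Aᶜ) (msub M Aᶜ A) (msub M Aᶜ Aᶜ) := by
  ext (i | i) (j | j) <;> rfl

theorem isUnit_schur_and_msub_inv_eq {M : Matrix V V ℝ} (hM : IsUnit M) {A : Finset V}
    (hD : IsUnit (msub M Aᶜ Aᶜ)) :
    IsUnit (msub M A A - msub M A Aᶜ * (msub M Aᶜ Aᶜ)⁻¹ * msub M Aᶜ A) ∧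
      msub M⁻¹ A A = (msub M A A - msub M A Aᶜ * (msub M Aᶜ Aᶜ)⁻¹ * msub M Aᶜ A)⁻¹ := by
  have hblocks := submatrix_sumComplEquiv M A
  have hM' : IsUnit (M.submatrix A.sumComplEquiv A.sumComplEquiv) :=
    (isUnit_submatrix_equiv _ _).mpr hM
  rw [hblocks] at hM'
  obtain ⟨hS, hinv⟩ := isUnit_schur_and_toBlocks₁₁_inv_eq hM' hD
  refine ⟨hS, ?_⟩
  rw [← hinv, ← hblocks, inv_submatrix_equiv]
  rfl

end Schur

section Entries

variable {V : Type*} [DecidableEq V] (B : Matrix V V ℝ)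

theorem msub_one_sub (S : Finset V) : msub (1 - B) S S = 1 - msub B S S := by
  ext i j
  simp [msub, one_apply]

theorem msub_one_sub_apply_of_ne {S T : Finset V} {i : S} {j : T} (h : (i : V) ≠ j) :
    msub (1 - B) S T i j = -B i j := by
  simp [msub, one_apply_ne h]

theorem isUnit_msub_one_sub_of_apply_ne_zero_lt [Fintype V] {g : V → ℕ}
    (hg : ∀ u v, B v u ≠ 0 → g u < g v) (S : Finset V) : IsUnit (msub (1 - B) S S) := by
  rw [msub_one_sub]
  exact (isNilpotent_of_apply_ne_zero_lt (fun x : S => g x) fun u v h => hg _ _ h).isUnit_one_sub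

theorem one_sub_schur_apply_of_ne [Fintype V] {A : Finset V} (N : Matrix ↥(Aᶜ) ↥(Aᶜ) ℝ)
    {u v : A} (huv : u ≠ v) :
    (1 - (msub (1 - B) A A - msub (1 - B) A Aᶜ * N * msub (1 - B) Aᶜ A) : Matrix A A ℝ) v u =
      B v u + ∑ s : ↥(Aᶜ), ∑ t : ↥(Aᶜ), B v s * N s t * B t u := by
  have hA : ∀ (i : A) (s : ↥(Aᶜ)), (i : V) ≠ s := fun i s =>
    ne_of_mem_of_not_mem i.2 (Finset.mem_compl.mp s.2)
  simp only [Matrix.sub_apply, one_apply_ne huv.symm, mul_apply, Finset.sum_mul,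
    msub_one_sub_apply_of_ne B (Subtype.coe_injective.ne huv.symm),
    msub_one_sub_apply_of_ne B (hA _ _), msub_one_sub_apply_of_ne B (hA _ _).symm]
  rw [Finset.sum_comm]
  simp only [mul_neg, neg_mul, neg_neg]
  ring

end Entries

/-- With `Λ = I − B` for `B` supported on an acyclic relation and any
`A ⊆ V`: the block `Λ_{Ā,Ā}` and the submatrix `(Λ⁻¹)_{A,A}` are invertible,
`[(Λ⁻¹)_{A,A}]⁻¹ = Λ_{A,A} − Λ_{A,Ā} (Λ_{Ā,Ā})⁻¹ Λ_{Ā,A}`, and for distinct `u, v ∈ A`,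
`B̃(A)_{vu} = B_{vu} + Σ_{s∈Ā} Σ_{t∈Ā} B_{vs} [(Λ_{Ā,Ā})⁻¹]_{st} B_{tu}`. -/
theorem stmt_4 {V : Type*} [Fintype V] [DecidableEq V]
    (r : V → V → Prop) (hacyc : ∀ v : V, ¬ Relation.TransGen r v v)
    (B : Matrix V V ℝ) (hsupp : ∀ u v : V, B v u ≠ 0 → r u v)
    (A : Finset V) :
    IsUnit (msub (1 - B) Aᶜ Aᶜ) ∧
    IsUnit (msub (1 - B)⁻¹ A A) ∧
    (msub (1 - B)⁻¹ A A)⁻¹ =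
      msub (1 - B) A A - msub (1 - B) A Aᶜ * (msub (1 - B) Aᶜ Aᶜ)⁻¹ * msub (1 - B) Aᶜ A ∧
    ∀ u v : ↥A, u ≠ v →
      Btilde B A v u =
        B (v : V) (u : V) +
          ∑ s : ↥(Aᶜ), ∑ t : ↥(Aᶜ),
            B (v : V) (s : V) * (msub (1 - B) Aᶜ Aᶜ)⁻¹ s t * B (t : V) (u : V) := by
  obtain ⟨g, hg⟩ := Relation.exists_lt_of_forall_not_transGen_self hacyc
  have hB : ∀ u v, B v u ≠ 0 → g u < g v := fun u v h => hg _ _ (hsupp u v h)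
  have hΛ : IsUnit (1 - B) := (isNilpotent_of_apply_ne_zero_lt g hB).isUnit_one_sub
  have hD := isUnit_msub_one_sub_of_apply_ne_zero_lt B hB Aᶜ
  obtain ⟨hS, hinv⟩ := isUnit_schur_and_msub_inv_eq hΛ hD
  have hSchur : (msub (1 - B)⁻¹ A A)⁻¹ =
      msub (1 - B) A A - msub (1 - B) A Aᶜ * (msub (1 - B) Aᶜ Aᶜ)⁻¹ * msub (1 - B) Aᶜ A := by
    rw [hinv, nonsing_inv_nonsing_inv _ ((isUnit_iff_isUnit_det _).mp hS)]
  refine ⟨hD, hinv ▸ isUnit_nonsing_inv_iff.mpr hS, hSchur, fun u v huv => ?_⟩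
  rw [Btilde, hSchur, one_sub_schur_apply_of_ne B _ huv]
end

section
/- Let V be a finite set, E ⊆ V × V an acyclic relation, and B ∈ ℝ^{V×V} supported on E. Let A ⊆ V and let u, v ∈ A be distinct. If u ∉ an(v) (there is no directed path in E from u to v), then the marginal direct effects matrix satisfies B̃(A)_{vu} = 0. -/
open Matrix

/-!
Adding the edge `v → u` to the acyclic relation keeps it acyclic, because there is no path
`u → v`. Rank the vertices along the enlarged relation: `B` is then lower triangular with respect
to the reversed ranking, and lower triangularity survives `1 - ·`, inversion, restriction to `A`
and inversion again, so `B̃(A)` is lower triangular too. Since `v` ranks strictly below `u`, the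
entry `B̃(A)_{vu}` lies above the diagonal and vanishes.
-/

open Relation OrderDual

universe w

section Acyclic

variable {α : Type w} {r : α → α → Prop} {a b : α}

def addEdge (r : α → α → Prop) (a b : α) : α → α → Prop :=
  fun x y => r x y ∨ (x = a ∧ y = b)

theorem transGen_addEdge {x y : α} (h : TransGen (addEdge r a b) x y) :
    TransGen r x y ∨ (ReflTransGen r x a ∧ ReflTransGen r b y) := by
  induction h with
  | single h =>
    rcases h with h | ⟨rfl, rfl⟩
    · exact .inl (.single h)
    · exact .inr ⟨.refl, .refl⟩
  | tail _ hyz ih =>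
    rcases ih, hyz with ⟨ih | ⟨hxa, hby⟩, hyz | ⟨rfl, rfl⟩⟩
    · exact .inl (ih.tail hyz)
    · exact .inr ⟨ih.to_reflTransGen, .refl⟩
    · exact .inr ⟨hxa, hby.tail hyz⟩
    · exact .inr ⟨hxa, .refl⟩

theorem acyclic_addEdge (hr : ∀ x, ¬ TransGen r x x) (hba : ¬ ReflTransGen r b a) :
    ∀ x, ¬ TransGen (addEdge r a b) x x := fun x hx =>
  (transGen_addEdge hx).elim (hr x) fun ⟨hxa, hbx⟩ => hba (hbx.trans hxa)

theorem exists_rank_of_acyclic [Finite α] (hr : ∀ x, ¬ TransGen r x x) :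
    ∃ f : α → Ordinal.{w}, ∀ x y, r x y → f x < f y := by
  have : Std.Irrefl (TransGen r) := ⟨hr⟩
  have : IsWellFounded α (TransGen r) := ⟨Finite.wellFounded_of_trans_of_irrefl _⟩
  exact ⟨IsWellFounded.rank (TransGen r), fun _ _ h => IsWellFounded.rank_lt_of_rel (TransGen.single h)⟩

end Acyclic

namespace Matrix

theorem blockTriangular_toDual_of_support {m α R : Type*} [Preorder α] [Zero R]
    {M : Matrix m m R} {r : m → m → Prop} {f : m → α}
    (hM : ∀ i j, M i j ≠ 0 → r j i) (hf : ∀ x y, r x y → f x < f y) :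
    M.BlockTriangular (toDual ∘ f) := fun i j hij => by
  by_contra h
  exact lt_asymm hij (hf j i (hM i j h))

theorem BlockTriangular.nonsing_inv {m α R : Type*} [Fintype m] [DecidableEq m] [CommRing R]
    [LinearOrder α] {M : Matrix m m R} {b : m → α} (hM : M.BlockTriangular b) :
    M⁻¹.BlockTriangular b := by
  by_cases h : IsUnit M.det
  · have := M.invertibleOfIsUnitDet h
    exact blockTriangular_inv_of_blockTriangular hM
  · rw [nonsing_inv_apply_not_isUnit M h]
    exact blockTriangular_zero

end Matrix

theorem blockTriangular_Btilde {V α : Type*} [Fintype V] [DecidableEq V] [LinearOrder α]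
    {B : Matrix V V ℝ} {b : V → α} (hB : B.BlockTriangular b) (A : Finset V) :
    (Btilde B A).BlockTriangular (b ∘ (↑)) :=
  blockTriangular_one.sub ((blockTriangular_one.sub hB).nonsing_inv.submatrix.nonsing_inv)

/-- For `B` supported on an acyclic relation, `A ⊆ V`, and distinct
`u, v ∈ A` with `u ∉ an(v)` (no directed path from `u` to `v`, i.e.
`¬ Relation.TransGen r u v`), the marginal direct effects satisfy `B̃(A)_{vu} = 0`. -/
theorem stmt_5 {V : Type*} [Fintype V] [DecidableEq V]
    (r : V → V → Prop) (hacyc : ∀ v : V, ¬ Relation.TransGen r v v)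
    (B : Matrix V V ℝ) (hsupp : ∀ u v : V, B v u ≠ 0 → r u v)
    (A : Finset V) (u v : ↥A) (hne : u ≠ v)
    (hnan : ¬ Relation.TransGen r (u : V) (v : V)) :
    Btilde B A v u = 0 := by
  have hvu : ¬ ReflTransGen r (u : V) v := by
    rw [reflTransGen_iff_eq_or_transGen]
    exact fun h => h.elim (fun h => hne (Subtype.ext h).symm) hnan
  obtain ⟨f, hf⟩ := exists_rank_of_acyclic (acyclic_addEdge hacyc hvu)
  have hB := blockTriangular_toDual_of_support (fun i j h => .inl (hsupp j i h)) hf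
  exact blockTriangular_Btilde hB A (hf v u (.inr ⟨rfl, rfl⟩))
end

section
/- Let V be a finite set, E ⊆ V × V an acyclic relation, and B ∈ ℝ^{V×V} supported on E; write Π = (I − B)^{-1}. Let v ∈ V and C ⊆ V ∖ {v}. Then the row vector identity Π_{v,C} = B̃(C ∪ {v})_{v,C} · Π_{C,C} holds; that is, for every u ∈ C, Π_{vu} = Σ_{c∈C} B̃(C ∪ {v})_{vc} Π_{cu}. -/
open Matrix

/-!
Since `B` is supported on an acyclic relation it is nilpotent, so `Π = ∑ₖ Bᵏ` and `1 - Π` is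
supported on the transitive closure of that relation. Hence the same holds for the principal
submatrix `Π_{A,A}` and, once more, for `B̃(A) = 1 - Π_{A,A}⁻¹`; in particular `B̃(A)` has zero
diagonal. Reading the identity `B̃(A) Π_{A,A} = Π_{A,A} - 1` at the entry `(v, u)` with `u ≠ v`
gives the claim, the summand `a = v` vanishing.
-/

open Finset Relation

theorem exists_rank_lt_card {ι : Type*} [Fintype ι] {s : ι → ι → Prop}
    (hs : ∀ i, ¬ TransGen s i i) :
    ∃ f : ι → ℕ, (∀ i j, s i j → f i < f j) ∧ ∀ i, f i < Fintype.card ι := by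
  classical
  refine ⟨fun i => #{j | TransGen s j i}, fun i j hij => card_lt_card ?_, fun i => ?_⟩
  · refine ssubset_iff_of_subset (fun k hk => ?_) |>.mpr ⟨i, ?_, fun hi => hs i ?_⟩
    · simp only [mem_filter, mem_univ, true_and] at hk ⊢
      exact hk.tail hij
    · simpa using TransGen.single hij
    · simpa using hi
  · exact card_lt_univ_of_notMem (s := {j | TransGen s j i}) (by simpa using hs i)

namespace Matrix

variable {ι κ R : Type*}

/-- Edges point from the column to the row index, as in the structural equation `X = B X + ε`. -/
def SupportedOn [Zero R] (M : Matrix ι ι R) (s : ι → ι → Prop) : Prop :=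
  ∀ i j, M i j ≠ 0 → s j i

namespace SupportedOn

variable {s : ι → ι → Prop} {M : Matrix ι ι R}

theorem apply_self [Zero R] (hM : M.SupportedOn s) (hs : ∀ i, ¬ s i i)
    (i : ι) : M i i = 0 :=
  not_not.mp fun h => hs i (hM i i h)

theorem submatrix [Zero R] (hM : M.SupportedOn s) (f : κ → ι) :
    (M.submatrix f f).SupportedOn fun a b => s (f a) (f b) :=
  fun a b => hM (f a) (f b)

variable [Fintype ι] [DecidableEq ι]

theorem add_le_of_pow_apply_ne_zero [Semiring R] (hM : M.SupportedOn s) {f : ι → ℕ}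
    (hf : ∀ i j, s i j → f i < f j) (k : ℕ) {i j : ι} (h : (M ^ k) i j ≠ 0) :
    f j + k ≤ f i := by
  induction k generalizing i with
  | zero =>
    obtain rfl : i = j := by by_contra hij; exact h (one_apply_ne hij)
    simp
  | succ k ih =>
    rw [pow_succ', mul_apply] at h
    obtain ⟨l, -, hl⟩ := exists_ne_zero_of_sum_ne_zero h
    have := hf l i (hM i l (left_ne_zero_of_mul hl))
    have := ih (right_ne_zero_of_mul hl)
    omega

theorem pow_card_eq_zero [Semiring R] (hM : M.SupportedOn s) (hs : ∀ i, ¬ TransGen s i i) :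
    M ^ Fintype.card ι = 0 := by
  obtain ⟨f, hf, hlt⟩ := exists_rank_lt_card hs
  ext i j
  by_contra h
  have := hM.add_le_of_pow_apply_ne_zero hf _ h
  have := hlt i
  omega

theorem isUnit_one_sub [Ring R] (hM : M.SupportedOn s) (hs : ∀ i, ¬ TransGen s i i) :
    IsUnit (1 - M) :=
  IsNilpotent.isUnit_one_sub ⟨_, hM.pow_card_eq_zero hs⟩

theorem pow_succ_transGen [Semiring R] (hM : M.SupportedOn s) (k : ℕ) :
    (M ^ (k + 1)).SupportedOn (TransGen s) := by
  induction k with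
  | zero =>
    rw [zero_add, pow_one]
    exact fun i j h => TransGen.single (hM i j h)
  | succ k ih =>
    intro i j h
    rw [pow_succ', mul_apply] at h
    obtain ⟨l, -, hl⟩ := exists_ne_zero_of_sum_ne_zero h
    exact (ih l j (right_ne_zero_of_mul hl)).tail (hM i l (left_ne_zero_of_mul hl))

theorem one_sub_inv_one_sub [CommRing R] (hM : M.SupportedOn s) (hs : ∀ i, ¬ TransGen s i i) :
    (1 - (1 - M)⁻¹).SupportedOn (TransGen s) := by
  have hinv : (1 - M)⁻¹ = ∑ k ∈ range (Fintype.card ι + 1), M ^ k :=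
    inv_eq_left_inv <| by
      rw [geom_sum_mul_neg, pow_succ, hM.pow_card_eq_zero hs, zero_mul, sub_zero]
  rw [hinv, sum_range_succ', pow_zero, sub_add_cancel_right]
  intro i j h
  rw [neg_apply, neg_ne_zero, sum_apply] at h
  obtain ⟨k, -, hk⟩ := exists_ne_zero_of_sum_ne_zero h
  exact hM.pow_succ_transGen k i j hk

end SupportedOn

end Matrix

theorem irreflexive_transGen_transGen_comp {ι κ : Type*} {r : ι → ι → Prop}
    (hr : ∀ i, ¬ TransGen r i i) (f : κ → ι) :
    ∀ a, ¬ TransGen (fun a b => TransGen r (f a) (f b)) a a :=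
  fun a h => hr (f a) (TransGen.lift' f le_rfl a a h)

theorem Finset.sum_coe_sort_insert {α M : Type*} [DecidableEq α] [AddCommMonoid M] {v : α}
    {C : Finset α} (hv : v ∉ C) (g : ↥(insert v C) → M) :
    ∑ a, g a = g ⟨v, mem_insert_self v C⟩ + ∑ c : ↥C, g ⟨c, mem_insert_of_mem c.2⟩ := by
  rw [← (subtypeInsertEquivOption hv).symm.sum_comp, Fintype.sum_option]
  rfl

section MarginalDirectEffects

variable {V : Type*} [Fintype V] [DecidableEq V] {r : V → V → Prop} {B : Matrix V V ℝ}

theorem supportedOn_one_sub_msub_inv (hB : B.SupportedOn r) (hr : ∀ i, ¬ TransGen r i i)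
    (A : Finset V) : (1 - msub (1 - B)⁻¹ A A).SupportedOn fun a b => TransGen r a b := by
  rw [msub, ← submatrix_one _ Subtype.val_injective]
  exact (hB.one_sub_inv_one_sub hr).submatrix _

theorem isUnit_msub_inv (hB : B.SupportedOn r) (hr : ∀ i, ¬ TransGen r i i) (A : Finset V) :
    IsUnit (msub (1 - B)⁻¹ A A) := by
  have := (supportedOn_one_sub_msub_inv hB hr A).isUnit_one_sub
    (irreflexive_transGen_transGen_comp hr _)
  rwa [sub_sub_cancel] at this

theorem Btilde_apply_self (hB : B.SupportedOn r) (hr : ∀ i, ¬ TransGen r i i) (A : Finset V)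
    (a : A) : Btilde B A a a = 0 := by
  have hA := irreflexive_transGen_transGen_comp hr ((↑) : A → V)
  rw [Btilde, ← sub_sub_cancel 1 (msub (1 - B)⁻¹ A A)]
  exact ((supportedOn_one_sub_msub_inv hB hr A).one_sub_inv_one_sub hA).apply_self hA a

theorem Btilde_mul_msub (hB : B.SupportedOn r) (hr : ∀ i, ¬ TransGen r i i) (A : Finset V) :
    Btilde B A * msub (1 - B)⁻¹ A A = msub (1 - B)⁻¹ A A - 1 := by
  rw [Btilde, sub_mul, one_mul,
    nonsing_inv_mul _ ((isUnit_iff_isUnit_det _).mp (isUnit_msub_inv hB hr A))]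

theorem inv_one_sub_apply_eq_sum_Btilde_mul (hB : B.SupportedOn r)
    (hr : ∀ i, ¬ TransGen r i i) {A : Finset V} {v u : V} (hv : v ∈ A) (hu : u ∈ A)
    (hvu : v ≠ u) :
    (1 - B)⁻¹ v u = ∑ a : A, Btilde B A ⟨v, hv⟩ a * (1 - B)⁻¹ a u := by
  have := congrFun (congrFun (Btilde_mul_msub hB hr A) ⟨v, hv⟩) ⟨u, hu⟩
  rw [mul_apply, Matrix.sub_apply, one_apply_ne (by simpa using hvu), sub_zero] at this
  exact this.symm

end MarginalDirectEffects

/-- For `B` supported on an acyclic relation, `Π = (I − B)⁻¹`, `v ∉ C`: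
the row-vector identity `Π_{v,C} = B̃(C ∪ {v})_{v,C} Π_{C,C}`, i.e. for each `u ∈ C`,
`Π_{vu} = Σ_{c∈C} B̃(C ∪ {v})_{vc} Π_{cu}`. -/
theorem stmt_7 {V : Type*} [Fintype V] [DecidableEq V]
    (r : V → V → Prop) (hacyc : ∀ v : V, ¬ Relation.TransGen r v v)
    (B : Matrix V V ℝ) (hsupp : ∀ u v : V, B v u ≠ 0 → r u v)
    (v : V) (C : Finset V) (hvC : v ∉ C) :
    ∀ u ∈ C,
      (1 - B)⁻¹ v u =
        ∑ c : ↥C,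
          Btilde B (insert v C) ⟨v, Finset.mem_insert_self v C⟩
              ⟨(c : V), Finset.mem_insert_of_mem c.2⟩ *
            (1 - B)⁻¹ (c : V) u := by
  intro u hu
  have hB : B.SupportedOn r := fun i j => hsupp j i
  rw [inv_one_sub_apply_eq_sum_Btilde_mul hB hacyc (mem_insert_self v C)
      (mem_insert_of_mem hu) (ne_of_mem_of_not_mem hu hvC).symm,
    sum_coe_sort_insert hvC, Btilde_apply_self hB hacyc, zero_mul, zero_add]
end

section
/- Let V be a finite set, E ⊆ V × V an acyclic relation, B ∈ ℝ^{V×V} supported on E, and let ε = (ε_w)_{w∈V} be a square-integrable random vector on a probability space with E[ε] = 0; set Y = (I − B)^{-1}ε. Let v ∈ V and C ⊆ V ∖ {v} satisfy: B_{vu} = 0 for all u ∉ C (i.e., pa(v) ⊆ C), E[Y_C ε_v] = 0 (the zero vector), and E[Y_C Y_Cᵀ] is invertible. Then the population least-squares coefficients satisfy (E[Y_C Y_Cᵀ])^{-1} E[Y_C Y_v] = (B_{v,C})ᵀ, and the corresponding residual satisfies Y_v − B_{v,C} Y_C = ε_v almost surely. -/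
/-!
Acyclicity of the support makes `B` nilpotent, so `I - B` is invertible and `Y = (I - B)⁻¹ ε`
is the unique solution of the structural equations `Y = B Y + ε`. Row `v` of these equations,
with `pa(v) ⊆ C`, is the residual identity `Y_v = B_{v,C} Y_C + ε_v`. Multiplying it by `Y_C` and
taking expectations kills the `ε_v` term by orthogonality, leaving the normal equations
`E[Y_C Y_v] = E[Y_C Y_Cᵀ] (B_{v,C})ᵀ`, which determine the coefficients once the Gram matrix is
invertible.
-/

open Matrix MeasureTheory

open scoped Classical in
lemma card_transGen_lt_of_rel {V : Type*} [Fintype V] {r : V → V → Prop}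
    (hacyc : ∀ v, ¬ Relation.TransGen r v v) {u w : V} (h : r u w) :
    (Finset.univ.filter (Relation.TransGen r · u)).card <
      (Finset.univ.filter (Relation.TransGen r · w)).card := by
  refine Finset.card_lt_card ⟨fun x hx => ?_, fun hsub => ?_⟩
  · simp only [Finset.mem_filter, Finset.mem_univ, true_and] at hx ⊢
    exact hx.tail h
  · have hu := hsub (by simpa using Relation.TransGen.single h)
    simp only [Finset.mem_filter, Finset.mem_univ, true_and] at hu
    exact hacyc u hu

namespace Matrix

variable {V R : Type*} [Fintype V] [DecidableEq V] [Semiring R]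

lemma pow_apply_eq_zero_of_lt_add {B : Matrix V V R} {f : V → ℕ}
    (hf : ∀ u w, B w u ≠ 0 → f u < f w) (k : ℕ) {u w : V} (hk : f w < f u + k) :
    (B ^ k) w u = 0 := by
  induction k generalizing w with
  | zero =>
    have hwu : w ≠ u := by rintro rfl; omega
    simp [one_apply_ne hwu]
  | succ k ih =>
    rw [pow_succ', mul_apply]
    refine Finset.sum_eq_zero fun x _ => ?_
    by_cases hx : B w x = 0
    · simp [hx]
    · simp [ih (w := x) (by have := hf x w hx; omega)]

lemma isNilpotent_of_apply_ne_zero_imp_lt {B : Matrix V V R} {f : V → ℕ} {N : ℕ}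
    (hf : ∀ u w, B w u ≠ 0 → f u < f w) (hN : ∀ w, f w ≤ N) : IsNilpotent B :=
  ⟨N + 1, ext fun w u => pow_apply_eq_zero_of_lt_add hf _ (by have := hN w; omega)⟩

lemma isNilpotent_of_support_acyclic {r : V → V → Prop}
    (hacyc : ∀ v, ¬ Relation.TransGen r v v) {B : Matrix V V R}
    (hsupp : ∀ u v, B v u ≠ 0 → r u v) : IsNilpotent B := by
  classical
  exact isNilpotent_of_apply_ne_zero_imp_lt (N := Fintype.card V)
    (fun u w h => card_transGen_lt_of_rel hacyc (hsupp u w h)) fun _ => Finset.card_le_univ _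

end Matrix

lemma sub_sum_eq_of_eq_one_sub_inv_mulVec {V R : Type*} [Fintype V] [DecidableEq V] [CommRing R]
    {B : Matrix V V R} (hB : IsUnit (1 - B)) {y e : V → R} (hy : y = (1 - B)⁻¹ *ᵥ e)
    {v : V} {C : Finset V} (hpa : ∀ u, u ∉ C → B v u = 0) :
    y v - ∑ c : C, B v c * y c = e v := by
  have hsolve : (1 - B) *ᵥ y = e := by
    rw [hy, mulVec_mulVec, mul_nonsing_inv _ ((isUnit_iff_isUnit_det _).mp hB), one_mulVec]
  have hsum : ∑ c : C, B v c * y c = ∑ u, B v u * y u :=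
    (Finset.sum_coe_sort C fun u => B v u * y u).trans
      (Finset.sum_subset (Finset.subset_univ C) fun u _ hu => by rw [hpa u hu, zero_mul])
  rw [hsum, ← hsolve, sub_mulVec, one_mulVec]
  rfl

lemma MeasureTheory.MemLp.mulVec {Ω m n : Type*} [MeasurableSpace Ω] {μ : Measure Ω}
    [Fintype n] {p : ENNReal} {ε : Ω → n → ℝ} (hε : ∀ j, MemLp (ε · j) p μ)
    (A : Matrix m n ℝ) (i : m) : MemLp (fun ω => (A *ᵥ ε ω) i) p μ :=
  memLp_finsetSum _ fun j _ => (hε j).const_mul (A i j)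

section LeastSquares

variable {Ω ι : Type*} [MeasurableSpace Ω] {μ : Measure Ω} [Fintype ι]
  {X : Ω → ι → ℝ} {y e : Ω → ℝ}

lemma integral_mul_eq_gram_mulVec (β : ι → ℝ) (hX : ∀ i, MemLp (X · i) 2 μ) (he : MemLp e 2 μ)
    (hy : ∀ᵐ ω ∂μ, y ω = β ⬝ᵥ X ω + e ω) (horth : ∀ i, ∫ ω, X ω i * e ω ∂μ = 0) :
    (fun i => ∫ ω, X ω i * y ω ∂μ) = (Matrix.of fun i j => ∫ ω, X ω i * X ω j ∂μ) *ᵥ β := by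
  funext i
  have hXX : ∀ j, Integrable (fun ω => β j * (X ω i * X ω j)) μ :=
    fun j => ((hX i).integrable_mul (hX j)).const_mul (β j)
  have hXe : Integrable (fun ω => X ω i * e ω) μ := (hX i).integrable_mul he
  calc ∫ ω, X ω i * y ω ∂μ
      = ∫ ω, (∑ j, β j * (X ω i * X ω j)) + X ω i * e ω ∂μ := by
        refine integral_congr_ae (hy.mono fun ω hω => ?_)
        simp only [hω, dotProduct, mul_add, Finset.mul_sum, mul_left_comm]
    _ = ∑ j, β j * ∫ ω, X ω i * X ω j ∂μ := by
        rw [integral_add (integrable_finsetSum _ fun j _ => hXX j) hXe, horth i, add_zero,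
          integral_finsetSum _ fun j _ => hXX j]
        simp only [integral_const_mul]
    _ = _ := by simp [mulVec, dotProduct, mul_comm]

lemma inv_gram_mulVec_integral_mul_eq [DecidableEq ι] (β : ι → ℝ) (hX : ∀ i, MemLp (X · i) 2 μ)
    (he : MemLp e 2 μ) (hy : ∀ᵐ ω ∂μ, y ω = β ⬝ᵥ X ω + e ω)
    (horth : ∀ i, ∫ ω, X ω i * e ω ∂μ = 0)
    (hG : IsUnit (Matrix.of fun i j => ∫ ω, X ω i * X ω j ∂μ)) :
    (Matrix.of fun i j => ∫ ω, X ω i * X ω j ∂μ)⁻¹ *ᵥ (fun i => ∫ ω, X ω i * y ω ∂μ) = β := by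
  rw [integral_mul_eq_gram_mulVec β hX he hy horth, mulVec_mulVec,
    nonsing_inv_mul _ ((isUnit_iff_isUnit_det _).mp hG), one_mulVec]

end LeastSquares

theorem stmt_8_general {V : Type*} [Fintype V] [DecidableEq V]
    (r : V → V → Prop) (hacyc : ∀ v : V, ¬ Relation.TransGen r v v)
    (B : Matrix V V ℝ) (hsupp : ∀ u v : V, B v u ≠ 0 → r u v)
    {Ω : Type*} [MeasureSpace Ω]
    (ε : Ω → V → ℝ)
    (hL2 : ∀ w : V, MemLp (fun ω => ε ω w) 2)
    (Y : Ω → V → ℝ) (hY : ∀ ω, Y ω = (1 - B)⁻¹ *ᵥ ε ω)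
    (v : V) (C : Finset V)
    (hpa : ∀ u : V, u ∉ C → B v u = 0)
    (horth : ∀ c ∈ C, ∫ ω, Y ω c * ε ω v = 0)
    (hMinv : IsUnit (Matrix.of fun c c' : ↥C => ∫ ω, Y ω (c : V) * Y ω (c' : V))) :
    ((Matrix.of fun c c' : ↥C => ∫ ω, Y ω (c : V) * Y ω (c' : V))⁻¹ *ᵥ
        fun c : ↥C => ∫ ω, Y ω (c : V) * Y ω v) = (fun c : ↥C => B v (c : V)) ∧
    ∀ᵐ ω, Y ω v - ∑ c : ↥C, B v (c : V) * Y ω (c : V) = ε ω v := by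
  have hB : IsUnit (1 - B) := (isNilpotent_of_support_acyclic hacyc hsupp).isUnit_one_sub
  have hres (ω : Ω) : Y ω v - ∑ c : ↥C, B v c * Y ω c = ε ω v :=
    sub_sum_eq_of_eq_one_sub_inv_mulVec hB (hY ω) hpa
  have hYL2 (w : V) : MemLp (fun ω => Y ω w) 2 := by
    simpa only [hY] using MemLp.mulVec hL2 (1 - B)⁻¹ w
  exact ⟨inv_gram_mulVec_integral_mul_eq _ (fun c => hYL2 c) (hL2 v)
      (ae_of_all _ fun ω => sub_eq_iff_eq_add'.mp (hres ω)) (fun c => horth c c.2) hMinv,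
    ae_of_all _ hres⟩

/-- Let `B` be supported on an acyclic relation on a finite `V`, let `ε` be a
square-integrable mean-zero random vector on a probability space, and `Y = (I − B)⁻¹ ε`.
If `C ⊆ V ∖ {v}` contains all parents of `v` (in the sense `B_{vu} = 0` for `u ∉ C`),
`E[Y_C ε_v] = 0`, and `E[Y_C Y_Cᵀ]` is invertible, then the population least-squares
coefficients `(E[Y_C Y_Cᵀ])⁻¹ E[Y_C Y_v]` equal `(B_{v,C})ᵀ`, and the residual satisfies
`Y_v − B_{v,C} Y_C = ε_v` almost surely. -/
theorem stmt_8 {V : Type*} [Fintype V] [DecidableEq V]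
    (r : V → V → Prop) (hacyc : ∀ v : V, ¬ Relation.TransGen r v v)
    (B : Matrix V V ℝ) (hsupp : ∀ u v : V, B v u ≠ 0 → r u v)
    {Ω : Type*} [MeasureSpace Ω] [IsProbabilityMeasure (volume : Measure Ω)]
    (ε : Ω → V → ℝ)
    (hL2 : ∀ w : V, MemLp (fun ω => ε ω w) 2)
    (hmean : ∀ w : V, ∫ ω, ε ω w = 0)
    (Y : Ω → V → ℝ) (hY : ∀ ω, Y ω = (1 - B)⁻¹ *ᵥ ε ω)
    (v : V) (C : Finset V) (hvC : v ∉ C)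
    (hpa : ∀ u : V, u ∉ C → B v u = 0)
    (horth : ∀ c ∈ C, ∫ ω, Y ω c * ε ω v = 0)
    (hMinv : IsUnit (Matrix.of fun c c' : ↥C => ∫ ω, Y ω (c : V) * Y ω (c' : V))) :
    ((Matrix.of fun c c' : ↥C => ∫ ω, Y ω (c : V) * Y ω (c' : V))⁻¹ *ᵥ
        fun c : ↥C => ∫ ω, Y ω (c : V) * Y ω v) = (fun c : ↥C => B v (c : V)) ∧
    ∀ᵐ ω, Y ω v - ∑ c : ↥C, B v (c : V) * Y ω (c : V) = ε ω v :=
  stmt_8_general r hacyc B hsupp ε hL2 Y hY v C hpa horth hMinv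
end

section
/- Let V be a finite set, E ⊆ V × V an acyclic relation, B ∈ ℝ^{V×V} supported on E, Ω ∈ ℝ^{V×V} symmetric, and Σ = (I−B)^{-1} Ω (I−B)^{-T}. Let v ∈ V and let C, A ⊆ V ∖ {v} satisfy: (i) pa(v) ⊆ C ⊆ an(v) and Ω_{vu} = 0 for all u ∈ C; (ii) A = An(C); (iii) D ∈ ℝ^{V×V} with D_{A,A} = B_{A,A}; (iv) S ∈ ℝ^{V×V} with S agreeing with Σ on rows and columns indexed by A ∪ {v}; and suppose (I−D)_{C,A} S_{A,C} is invertible. Then the debiased direct effect satisfies δ_v(C, A, S, D) = B_{v,C}. -/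
open Matrix

/-- The debiased direct effect
`δ_v(C, A, S, D) = ([(I−D)_{C,A} S_{A,C}]⁻¹ (I−D)_{C,A} S_{A,v})ᵀ`, as a vector `↥C → ℝ`. -/
noncomputable def delta {V : Type*} [Fintype V] [DecidableEq V]
    (v : V) (C A : Finset V) (S D : Matrix V V ℝ) : ↥C → ℝ :=
  ((msub (1 - D) C A * msub S A C)⁻¹ * msub (1 - D) C A) *ᵥ fun a : ↥A => S (a : V) v

/-!
Write `L = I − B`. Acyclicity makes `L` invertible (a vector fixed by `B` vanishes, by
well-founded induction along the relation), so `L Σ Lᵀ = Ω`. Reading column `v` of this identity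
on the rows `C` gives `L_{C,·} Σ (e_v − B_{v,·}ᵀ) = Ω_{C,v} = 0`. Since the parents of `C` lie in
`A = An(C)` and those of `v` lie in `C`, this is the finite system
`(I−B)_{C,A} (Σ_{A,v} − Σ_{A,C} B_{v,C}ᵀ) = 0`, in which `I − B` may be replaced by `I − D` and `Σ`
by `S`; inverting `(I−D)_{C,A} S_{A,C}` yields `δ_v = B_{v,C}`.
-/

namespace Matrix

variable {V K : Type*} [Fintype V] [DecidableEq V] [Field K]

theorem isUnit_one_sub_of_acyclic {r : V → V → Prop} (hacyc : ∀ v, ¬ Relation.TransGen r v v)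
    {B : Matrix V V K} (hsupp : ∀ u v, B v u ≠ 0 → r u v) : IsUnit (1 - B) := by
  have : Std.Irrefl (Relation.TransGen r) := ⟨hacyc⟩
  have hwf : WellFounded (Relation.TransGen r) := Finite.wellFounded_of_trans_of_irrefl _
  rw [← mulVec_injective_iff_isUnit]
  intro x y hxy
  set z := x - y
  have hfix : z = B *ᵥ z := by
    have : (1 - B) *ᵥ z = 0 := by rw [mulVec_sub, hxy, sub_self]
    rwa [sub_mulVec, one_mulVec, sub_eq_zero] at this
  suffices ∀ v, z v = 0 from sub_eq_zero.1 (funext this)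
  refine hwf.fix fun v ih => ?_
  rw [hfix, mulVec, dotProduct]
  refine Finset.sum_eq_zero fun u _ => ?_
  by_cases huv : B v u = 0
  · rw [huv, zero_mul]
  · rw [ih u (.single (hsupp u v huv)), mul_zero]

theorem mul_mul_transpose_of_eq_inv_mul_mul_inv_transpose {L Om Sig : Matrix V V K}
    (hL : IsUnit L) (hSig : Sig = L⁻¹ * Om * L⁻¹ᵀ) : L * Sig * Lᵀ = Om := by
  have hdet : IsUnit L.det := (isUnit_iff_isUnit_det L).1 hL
  have hdetT : IsUnit Lᵀ.det := by rwa [det_transpose]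
  rw [hSig, transpose_nonsing_inv, Matrix.mul_assoc, Matrix.mul_assoc, nonsing_inv_mul _ hdetT,
    Matrix.mul_one, mul_nonsing_inv_cancel_left _ _ hdet]

end Matrix

section

variable {V : Type*} [Fintype V]

theorem msub_mulVec_of_forall_notMem {M : Matrix V V ℝ} {R C : Finset V} {x : V → ℝ}
    (h : ∀ i ∈ R, ∀ j ∉ C, M i j * x j = 0) :
    msub M R C *ᵥ (fun j : C => x j) = fun i : R => (M *ᵥ x) i := by
  funext i
  simp only [mulVec, dotProduct, msub, submatrix_apply]
  rw [Finset.sum_coe_sort C fun j => M i j * x j]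
  exact Finset.sum_subset (Finset.subset_univ C) fun j _ hj => h i i.2 j hj

theorem msub_mul_msub_mulVec_eq [DecidableEq V] {B Sig Om : Matrix V V ℝ} {v : V} {C A : Finset V}
    (hcov : (1 - B) * Sig * (1 - B)ᵀ = Om) (hrow : ∀ c ∈ C, ∀ w ∉ A, (1 - B) c w = 0)
    (hpa : ∀ u ∉ C, B v u = 0) (hOm : ∀ c ∈ C, Om c v = 0) :
    (msub (1 - B) C A * msub Sig A C) *ᵥ (fun c : C => B v c) =
      msub (1 - B) C A *ᵥ fun a : A => Sig a v := by
  have hrowv : (1 - B)ᵀ.col v = Pi.single v 1 - B v := by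
    ext u
    simp [one_apply, Pi.single_apply, eq_comm]
  have hcol : (1 - B) *ᵥ (Sig.col v - Sig *ᵥ B v) = Om.col v := by
    rw [← mulVec_single_one, ← mulVec_single_one, ← hcov, ← mulVec_mulVec, ← mulVec_mulVec,
      mulVec_single_one (1 - B)ᵀ, hrowv, mulVec_sub Sig]
  have hsupp (x : V → ℝ) : ∀ c ∈ C, ∀ w ∉ A, (1 - B) c w * x w = 0 :=
    fun c hc w hw => by rw [hrow c hc w hw, zero_mul]
  rw [← mulVec_mulVec, msub_mulVec_of_forall_notMem fun _ _ u hu => by rw [hpa u hu, mul_zero],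
    msub_mulVec_of_forall_notMem (hsupp _),
    msub_mulVec_of_forall_notMem (x := fun w => Sig w v) (hsupp _)]
  funext c
  have := congr_fun hcol c
  rw [mulVec_sub, Pi.sub_apply, col_apply, hOm c c.2, sub_eq_zero] at this
  exact this.symm

end

theorem stmt_9_general {V : Type*} [Fintype V] [DecidableEq V]
    (r : V → V → Prop) (hacyc : ∀ v : V, ¬ Relation.TransGen r v v)
    (B : Matrix V V ℝ) (hsupp : ∀ u v : V, B v u ≠ 0 → r u v)
    (Om : Matrix V V ℝ) (hOm : Om.IsSymm)
    (Sig : Matrix V V ℝ) (hSig : Sig = (1 - B)⁻¹ * Om * ((1 - B)⁻¹)ᵀ)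
    (v : V) (C A : Finset V)
    (hpa : ∀ u : V, B v u ≠ 0 → u ∈ C)
    (hOmv : ∀ u ∈ C, Om v u = 0)
    (hA : ∀ w : V, w ∈ A ↔ ∃ c ∈ C, Relation.ReflTransGen r w c)
    (D : Matrix V V ℝ) (hD : ∀ a ∈ A, ∀ a' ∈ A, D a a' = B a a')
    (S : Matrix V V ℝ)
    (hS : ∀ i ∈ insert v A, ∀ j ∈ insert v A, S i j = Sig i j)
    (hinv : IsUnit (msub (1 - D) C A * msub S A C)) :
    delta v C A S D = fun c : ↥C => B v (c : V) := by
  have hCA : ∀ c ∈ C, c ∈ A := fun c hc => (hA c).2 ⟨c, hc, .refl⟩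
  have hcov : (1 - B) * Sig * (1 - B)ᵀ = Om :=
    mul_mul_transpose_of_eq_inv_mul_mul_inv_transpose (isUnit_one_sub_of_acyclic hacyc hsupp) hSig
  have hrow : ∀ c ∈ C, ∀ w ∉ A, (1 - B) c w = 0 := by
    intro c hc w hw
    have hBcw : B c w = 0 := by
      by_contra h
      exact hw ((hA w).2 ⟨c, hc, .single (hsupp w c h)⟩)
    rw [Matrix.sub_apply, one_apply_ne (ne_of_mem_of_not_mem (hCA c hc) hw), hBcw, sub_zero]
  have hDB : msub (1 - D) C A = msub (1 - B) C A := by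
    ext c a
    simp only [msub, submatrix_apply, Matrix.sub_apply, hD c (hCA c c.2) a a.2]
  have hSSig : msub S A C = msub Sig A C := by
    ext a c
    exact hS a (Finset.mem_insert_of_mem a.2) c (Finset.mem_insert_of_mem (hCA c c.2))
  have hSv : (fun a : A => S a v) = fun a : A => Sig a v :=
    funext fun a => hS a (Finset.mem_insert_of_mem a.2) v (Finset.mem_insert_self v A)
  have hvec := msub_mul_msub_mulVec_eq hcov hrow (fun u hu => not_not.1 (mt (hpa u) hu))
    fun c hc => (hOm.apply c v).symm.trans (hOmv c hc)
  rw [hDB, hSSig] at hinv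
  have := hinv.invertible
  rw [delta, hDB, hSSig, hSv, ← mulVec_mulVec]
  exact inv_mulVec_eq_vec hvec.symm

/-- Lemma on the debiased direct effect: with `Σ = (I−B)⁻¹ Ω (I−B)⁻ᵀ`,
`pa(v) ⊆ C ⊆ an(v)`, `Ω_{vu} = 0` for `u ∈ C`, `A = An(C)`, `D_{A,A} = B_{A,A}`,
`S` agreeing with `Σ` on `(A ∪ {v}) × (A ∪ {v})`, and `(I−D)_{C,A} S_{A,C}` invertible,
one has `δ_v(C, A, S, D) = B_{v,C}`. -/
theorem stmt_9 {V : Type*} [Fintype V] [DecidableEq V]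
    (r : V → V → Prop) (hacyc : ∀ v : V, ¬ Relation.TransGen r v v)
    (B : Matrix V V ℝ) (hsupp : ∀ u v : V, B v u ≠ 0 → r u v)
    (Om : Matrix V V ℝ) (hOm : Om.IsSymm)
    (Sig : Matrix V V ℝ) (hSig : Sig = (1 - B)⁻¹ * Om * ((1 - B)⁻¹)ᵀ)
    (v : V) (C A : Finset V) (hvC : v ∉ C) (hvA : v ∉ A)
    (hpa : ∀ u : V, B v u ≠ 0 → u ∈ C)
    (hCan : ∀ c ∈ C, Relation.TransGen r c v)
    (hOmv : ∀ u ∈ C, Om v u = 0)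
    (hA : ∀ w : V, w ∈ A ↔ ∃ c ∈ C, Relation.ReflTransGen r w c)
    (D : Matrix V V ℝ) (hD : ∀ a ∈ A, ∀ a' ∈ A, D a a' = B a a')
    (S : Matrix V V ℝ)
    (hS : ∀ i ∈ insert v A, ∀ j ∈ insert v A, S i j = Sig i j)
    (hinv : IsUnit (msub (1 - D) C A * msub S A C)) :
    delta v C A S D = fun c : ↥C => B v (c : V) :=
  stmt_9_general r hacyc B hsupp Om hOm Sig hSig v C A hpa hOmv hA D hD S hS hinv
end

section
/- Let V be a finite set, E ⊆ V × V an acyclic relation, B ∈ ℝ^{V×V} supported on E, and Σ = (I−B)^{-1} Ω (I−B)^{-T} for symmetric Ω. Let v ∈ V, let C, A, S, D satisfy the hypotheses: pa(v) ⊆ C ⊆ an(v), Ω_{vu} = 0 for u ∈ C, A = An(C), D_{A,A} = B_{A,A} and D_{A, V∖A} = 0, S agrees with Σ on (A∪{v}) × (A∪{v}), and (I−D)_{C,A} S_{A,C} is invertible. Let ε be an integrable random vector with E[ε] = 0 such that the random vector ε_C = (ε_c)_{c∈C} is independent of ε_v, and set Y = (I−B)^{-1}ε. Then for every c ∈ C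 the residuals satisfy γ_c(D) := Y_c − Σ_{w∈V} D_{cw} Y_w = ε_c and γ_v(C,S,D) := Y_v − δ_v(C, An(C), S, D) Y_C = ε_v; hence γ_c(D) is independent of γ_v(C,S,D), and for any integer K ≥ 2 with E[|ε_c|^{K−1}] < ∞ and E[|ε_v|] < ∞ one has E[γ_c(D)^{K−1} γ_v(C,S,D)] = 0. -/
/-!
Order `V` by the number of descendants: since `E` is acyclic, `1 - B` is then unitriangular, so it
is invertible and `Y = B Y + ε`, i.e. `Y_x - ∑_w B_{xw} Y_w = ε_x` for every `x`. The set
`A = An(C)` is closed under parents, so the rows of `D` and `B` indexed by `A` agree and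
`γ_c(D) = ε_c`. For `N = (1 - B)⁻¹ Ω = Σ (1 - B)ᵀ` the parents of `v` lying in `C` give
`S_{A,v} = S_{A,C} B_{v,C} + N_{A,v}`, while `(1 - D)_{C,A} N_{A,v} = ((1 - B) N)_{C,v} = Ω_{C,v} = 0`;
hence `δ_v = B_{v,C}` and `γ_v = ε_v`. Independence and the vanishing moment are then those of
`ε_c` and the centred `ε_v`.
-/

open Matrix MeasureTheory ProbabilityTheory

lemma sum_coe_sort_of_support_subset {ι M : Type*} [Fintype ι] [AddCommMonoid M]
    (s : Finset ι) {f : ι → M} (hf : ∀ i, f i ≠ 0 → i ∈ s) : ∑ i : s, f i = ∑ i, f i :=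
  (Finset.sum_coe_sort s f).trans <|
    Finset.sum_subset (Finset.subset_univ s) fun i _ hi => not_not.1 (mt (hf i) hi)

section Acyclic

variable {V : Type*} {r : V → V → Prop}

noncomputable def descendantCount (r : V → V → Prop) (w : V) : ℕ :=
  {x | Relation.TransGen r w x}.ncard

lemma descendantCount_lt [Finite V] (hacyc : ∀ v, ¬ Relation.TransGen r v v) {u w : V}
    (huw : Relation.TransGen r u w) : descendantCount r w < descendantCount r u :=
  Set.ncard_lt_ncard ⟨fun _ hx => huw.trans hx, fun hsub => hacyc w (hsub huw)⟩ (Set.toFinite _)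

variable [Fintype V] [DecidableEq V] {R : Type*} [CommRing R] {B : Matrix V V R}

theorem det_one_sub_eq_one (hacyc : ∀ v, ¬ Relation.TransGen r v v)
    (hsupp : ∀ u v, B v u ≠ 0 → r u v) : (1 - B).det = 1 := by
  have hB : ∀ i j, ¬ descendantCount r i < descendantCount r j → B i j = 0 := fun i j h =>
    by_contra fun hne => h (descendantCount_lt hacyc (.single (hsupp j i hne)))
  have htri : (1 - B).BlockTriangular (descendantCount r) :=
    blockTriangular_one.sub fun i j hji => hB i j (lt_asymm hji)
  rw [htri.det]
  refine Finset.prod_eq_one fun k _ => ?_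
  have hblock : (1 - B).toSquareBlock (descendantCount r) k = 1 := by
    ext ⟨i, hi⟩ ⟨j, hj⟩
    have hBij : B i j = 0 := hB i j (hi.trans hj.symm).not_lt
    simp [toSquareBlock_def, one_apply, hBij]
  rw [hblock, det_one]

end Acyclic

section StructuralEquations

variable {V R : Type*} [CommRing R]

/-- Closure of `A` under parents, the parents of `a` being the `w` with `B a w ≠ 0`. -/
def IsAncestral (B : Matrix V V R) (A : Finset V) : Prop :=
  ∀ a ∈ A, ∀ w, B a w ≠ 0 → w ∈ A

lemma isAncestral_of_forall_mem_iff {r : V → V → Prop} {B : Matrix V V R}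
    (hsupp : ∀ u v, B v u ≠ 0 → r u v) {C A : Finset V}
    (hA : ∀ w, w ∈ A ↔ ∃ c ∈ C, Relation.ReflTransGen r w c) : IsAncestral B A := by
  intro a ha w hw
  obtain ⟨c, hc, hac⟩ := (hA a).1 ha
  exact (hA w).2 ⟨c, hc, .head (hsupp w a hw) hac⟩

namespace IsAncestral

variable {B D : Matrix V V R} {A : Finset V}

lemma row_eq (hanc : IsAncestral B A) (hD : ∀ a ∈ A, ∀ a' ∈ A, D a a' = B a a')
    (hD0 : ∀ a ∈ A, ∀ w : V, w ∉ A → D a w = 0) {a : V} (ha : a ∈ A) : D a = B a := by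
  funext w
  by_cases hw : w ∈ A
  · exact hD a ha w hw
  · rw [hD0 a ha w hw, eq_comm]
    by_contra hB
    exact hw (hanc a ha w hB)

variable [DecidableEq V]

lemma one_sub_apply_eq_zero (hanc : IsAncestral B A) {a w : V} (ha : a ∈ A) (hw : w ∉ A) :
    (1 - B) a w = 0 := by
  have hBaw : B a w = 0 := by
    by_contra hB
    exact hw (hanc a ha w hB)
  have haw : a ≠ w := fun h => hw (h ▸ ha)
  simp [one_apply, haw, hBaw]

variable [Fintype V]

lemma sum_one_sub_mul_eq (hanc : IsAncestral B A) {c : V} (hc : c ∈ A) (hDc : D c = B c)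
    (N : Matrix V V R) (v : V) : ∑ a : A, (1 - D) c a * N a v = ((1 - B) * N) c v := by
  have hrow : (1 - D) c = (1 - B) c := by
    funext w
    simp only [Matrix.sub_apply, hDc]
  rw [hrow, mul_apply]
  exact sum_coe_sort_of_support_subset A (f := fun w => (1 - B) c w * N w v) fun w hw =>
    by_contra fun hwA => hw (by rw [hanc.one_sub_apply_eq_zero hc hwA, zero_mul])

end IsAncestral

variable [Fintype V] [DecidableEq V]

lemma sub_sum_mul_eq_of_one_sub_mulVec {B : Matrix V V R} {y e : V → R}
    (h : (1 - B) *ᵥ y = e) (x : V) : y x - ∑ w, B x w * y w = e x := by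
  rw [← h, sub_mulVec, one_mulVec]
  rfl

variable {B Om Sig : Matrix V V R}

lemma sub_mul_transpose_eq_inv_mul (hdet : IsUnit (1 - B).det)
    (hSig : Sig = (1 - B)⁻¹ * Om * ((1 - B)⁻¹)ᵀ) : Sig - Sig * Bᵀ = (1 - B)⁻¹ * Om := by
  calc Sig - Sig * Bᵀ = Sig * (1 - B)ᵀ := by rw [transpose_sub, transpose_one, mul_sub, mul_one]
    _ = (1 - B)⁻¹ * Om := by
      rw [hSig, mul_assoc, ← transpose_mul, mul_nonsing_inv _ hdet, transpose_one, mul_one]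

lemma apply_eq_sum_mul_add (hdet : IsUnit (1 - B).det)
    (hSig : Sig = (1 - B)⁻¹ * Om * ((1 - B)⁻¹)ᵀ) (a v : V) :
    Sig a v = ∑ w, Sig a w * B v w + ((1 - B)⁻¹ * Om) a v := by
  rw [← sub_mul_transpose_eq_inv_mul hdet hSig, Matrix.sub_apply, mul_apply]
  simp only [transpose_apply]
  ring

end StructuralEquations

lemma delta_eq_of_mulVec_eq {V : Type*} [Fintype V] [DecidableEq V] {v : V} {C A : Finset V}
    {S D : Matrix V V ℝ} (hinv : IsUnit (msub (1 - D) C A * msub S A C)) {β : C → ℝ}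
    (h : msub (1 - D) C A *ᵥ (fun a : A => S a v) = (msub (1 - D) C A * msub S A C) *ᵥ β) :
    delta v C A S D = β := by
  rw [delta, ← mulVec_mulVec, h, mulVec_mulVec,
    nonsing_inv_mul _ ((isUnit_iff_isUnit_det _).1 hinv), one_mulVec]

theorem delta_eq_structural_coeff {V : Type*} [Fintype V] [DecidableEq V]
    {B Om Sig S D : Matrix V V ℝ} (hdet : IsUnit (1 - B).det) (hOm : Om.IsSymm)
    (hSig : Sig = (1 - B)⁻¹ * Om * ((1 - B)⁻¹)ᵀ) {v : V} {C A : Finset V} (hCA : C ⊆ A)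
    (hpa : ∀ u, B v u ≠ 0 → u ∈ C) (hOmv : ∀ u ∈ C, Om v u = 0) (hanc : IsAncestral B A)
    (hrow : ∀ c ∈ C, D c = B c) (hS : ∀ i ∈ insert v A, ∀ j ∈ insert v A, S i j = Sig i j)
    (hinv : IsUnit (msub (1 - D) C A * msub S A C)) :
    delta v C A S D = fun u : C => B v u := by
  set N := (1 - B)⁻¹ * Om
  have hcov : ∀ a ∈ A, S a v - ∑ u : C, S a u * B v u = N a v := by
    intro a ha
    have hSa : ∀ j ∈ insert v A, S a j = Sig a j := hS a (Finset.mem_insert_of_mem ha)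
    rw [sum_coe_sort_of_support_subset C fun u hu => hpa u (right_ne_zero_of_mul hu),
      hSa v (Finset.mem_insert_self v A), apply_eq_sum_mul_add hdet hSig a v]
    have hsum : ∑ u, S a u * B v u = ∑ u, Sig a u * B v u := Finset.sum_congr rfl fun u _ => by
      by_cases hu : u ∈ C
      · rw [hSa u (Finset.mem_insert_of_mem (hCA hu))]
      · rw [not_not.1 (mt (hpa u) hu), mul_zero, mul_zero]
    rw [hsum, add_sub_cancel_left]
  have hnoise : ∀ c ∈ C, ∑ a : A, (1 - D) c a * N a v = 0 := by
    intro c hc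
    rw [hanc.sum_one_sub_mul_eq (hCA hc) (hrow c hc), ← mul_assoc,
      mul_nonsing_inv _ hdet, one_mul, hOm.apply v c, hOmv c hc]
  refine delta_eq_of_mulVec_eq hinv ?_
  rw [← mulVec_mulVec]
  ext c
  rw [← sub_eq_zero, ← Pi.sub_apply, ← mulVec_sub, ← hnoise c c.2]
  refine Finset.sum_congr rfl fun a _ => ?_
  simp only [msub, submatrix_apply, Pi.sub_apply, mulVec, dotProduct]
  rw [hcov a a.2]

lemma ProbabilityTheory.IndepFun.integral_pow_mul_eq_zero {Ω : Type*} [MeasurableSpace Ω]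
    {μ : Measure Ω} {X Z : Ω → ℝ} (h : IndepFun X Z μ) (hX : AEStronglyMeasurable X μ)
    (hZ : AEStronglyMeasurable Z μ) (hZ0 : ∫ ω, Z ω ∂μ = 0) (n : ℕ) :
    ∫ ω, X ω ^ n * Z ω ∂μ = 0 := by
  have hXnZ : IndepFun (fun ω => X ω ^ n) Z μ := h.comp (measurable_id.pow_const n) measurable_id
  rw [hXnZ.integral_fun_mul_eq_mul_integral (hX.pow n) hZ, hZ0, mul_zero]

theorem stmt_10_general {V : Type*} [Fintype V] [DecidableEq V]
    (r : V → V → Prop) (hacyc : ∀ v : V, ¬ Relation.TransGen r v v)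
    (B : Matrix V V ℝ) (hsupp : ∀ u v : V, B v u ≠ 0 → r u v)
    (Om : Matrix V V ℝ) (hOm : Om.IsSymm)
    (Sig : Matrix V V ℝ) (hSig : Sig = (1 - B)⁻¹ * Om * ((1 - B)⁻¹)ᵀ)
    (v : V) (C A : Finset V)
    (hpa : ∀ u : V, B v u ≠ 0 → u ∈ C)
    (hOmv : ∀ u ∈ C, Om v u = 0)
    (hA : ∀ w : V, w ∈ A ↔ ∃ c ∈ C, Relation.ReflTransGen r w c)
    (D : Matrix V V ℝ) (hD : ∀ a ∈ A, ∀ a' ∈ A, D a a' = B a a')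
    (hD0 : ∀ a ∈ A, ∀ w : V, w ∉ A → D a w = 0)
    (S : Matrix V V ℝ)
    (hS : ∀ i ∈ insert v A, ∀ j ∈ insert v A, S i j = Sig i j)
    (hinv : IsUnit (msub (1 - D) C A * msub S A C))
    {Ω : Type*} [MeasureSpace Ω]
    (ε : Ω → V → ℝ)
    (hint : ∀ w : V, Integrable fun ω => ε ω w)
    (hmean : ∀ w : V, ∫ ω, ε ω w = 0)
    (hindep : IndepFun (fun ω => fun c : ↥C => ε ω (c : V)) (fun ω => ε ω v) volume)
    (Y : Ω → V → ℝ) (hY : ∀ ω, Y ω = (1 - B)⁻¹ *ᵥ ε ω) :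
    ∀ c ∈ C,
      (∀ ω, Y ω c - ∑ w : V, D c w * Y ω w = ε ω c) ∧
      (∀ ω, Y ω v - ∑ u : ↥C, delta v C A S D u * Y ω (u : V) = ε ω v) ∧
      IndepFun (fun ω => Y ω c - ∑ w : V, D c w * Y ω w)
        (fun ω => Y ω v - ∑ u : ↥C, delta v C A S D u * Y ω (u : V)) volume ∧
      ∀ K : ℕ, 2 ≤ K →
        Integrable (fun ω => |ε ω c| ^ (K - 1)) →
        ∫ ω, (Y ω c - ∑ w : V, D c w * Y ω w) ^ (K - 1) *
            (Y ω v - ∑ u : ↥C, delta v C A S D u * Y ω (u : V)) = 0 := by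
  intro c hc
  have hdet : IsUnit (1 - B).det := by rw [det_one_sub_eq_one hacyc hsupp]; exact isUnit_one
  have hanc : IsAncestral B A := isAncestral_of_forall_mem_iff hsupp hA
  have hCA : C ⊆ A := fun c hc => (hA c).2 ⟨c, hc, .refl⟩
  have hrow : ∀ c ∈ C, D c = B c := fun c hc => hanc.row_eq hD hD0 (hCA hc)
  have hstruct : ∀ ω x, Y ω x - ∑ w, B x w * Y ω w = ε ω x := fun ω =>
    sub_sum_mul_eq_of_one_sub_mulVec <| by
      rw [hY ω, mulVec_mulVec, mul_nonsing_inv _ hdet, one_mulVec]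
  have hγc : ∀ ω, Y ω c - ∑ w, D c w * Y ω w = ε ω c := fun ω => by rw [hrow c hc, hstruct]
  have hγv : ∀ ω, Y ω v - ∑ u : C, delta v C A S D u * Y ω u = ε ω v := fun ω => by
    rw [delta_eq_structural_coeff hdet hOm hSig hCA hpa hOmv hanc hrow hS hinv,
      sum_coe_sort_of_support_subset C fun u hu => hpa u (left_ne_zero_of_mul hu), hstruct]
  have hindc : IndepFun (fun ω => ε ω c) (fun ω => ε ω v) volume :=
    hindep.comp (measurable_pi_apply (⟨c, hc⟩ : C)) measurable_id
  refine ⟨hγc, hγv, ?_, fun K _ _ => ?_⟩ <;> simp only [hγc, hγv]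
  · exact hindc
  · exact hindc.integral_pow_mul_eq_zero (hint c).aestronglyMeasurable
      (hint v).aestronglyMeasurable (hmean v) (K - 1)

/-- under the hypotheses of the debiased-direct-effect lemma, with
`D_{A,A} = B_{A,A}`, `D_{A,V∖A} = 0`, and an integrable mean-zero error vector `ε` whose
subvector `ε_C` is independent of `ε_v`, the residuals satisfy `γ_c(D) = ε_c` and
`γ_v(C,S,D) = ε_v`; hence `γ_c(D)` is independent of `γ_v(C,S,D)` and, for any `K ≥ 2`
with `E[|ε_c|^{K−1}] < ∞`, one has `E[γ_c(D)^{K−1} γ_v(C,S,D)] = 0`. -/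
theorem stmt_10 {V : Type*} [Fintype V] [DecidableEq V]
    (r : V → V → Prop) (hacyc : ∀ v : V, ¬ Relation.TransGen r v v)
    (B : Matrix V V ℝ) (hsupp : ∀ u v : V, B v u ≠ 0 → r u v)
    (Om : Matrix V V ℝ) (hOm : Om.IsSymm)
    (Sig : Matrix V V ℝ) (hSig : Sig = (1 - B)⁻¹ * Om * ((1 - B)⁻¹)ᵀ)
    (v : V) (C A : Finset V) (hvC : v ∉ C) (hvA : v ∉ A)
    (hpa : ∀ u : V, B v u ≠ 0 → u ∈ C)
    (hCan : ∀ c ∈ C, Relation.TransGen r c v)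
    (hOmv : ∀ u ∈ C, Om v u = 0)
    (hA : ∀ w : V, w ∈ A ↔ ∃ c ∈ C, Relation.ReflTransGen r w c)
    (D : Matrix V V ℝ) (hD : ∀ a ∈ A, ∀ a' ∈ A, D a a' = B a a')
    (hD0 : ∀ a ∈ A, ∀ w : V, w ∉ A → D a w = 0)
    (S : Matrix V V ℝ)
    (hS : ∀ i ∈ insert v A, ∀ j ∈ insert v A, S i j = Sig i j)
    (hinv : IsUnit (msub (1 - D) C A * msub S A C))
    {Ω : Type*} [MeasureSpace Ω] [IsProbabilityMeasure (volume : Measure Ω)]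
    (ε : Ω → V → ℝ)
    (hint : ∀ w : V, Integrable fun ω => ε ω w)
    (hmean : ∀ w : V, ∫ ω, ε ω w = 0)
    (hindep : IndepFun (fun ω => fun c : ↥C => ε ω (c : V)) (fun ω => ε ω v) volume)
    (Y : Ω → V → ℝ) (hY : ∀ ω, Y ω = (1 - B)⁻¹ *ᵥ ε ω) :
    ∀ c ∈ C,
      (∀ ω, Y ω c - ∑ w : V, D c w * Y ω w = ε ω c) ∧
      (∀ ω, Y ω v - ∑ u : ↥C, delta v C A S D u * Y ω (u : V) = ε ω v) ∧
      IndepFun (fun ω => Y ω c - ∑ w : V, D c w * Y ω w)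
        (fun ω => Y ω v - ∑ u : ↥C, delta v C A S D u * Y ω (u : V)) volume ∧
      ∀ K : ℕ, 2 ≤ K →
        Integrable (fun ω => |ε ω c| ^ (K - 1)) →
        ∫ ω, (Y ω c - ∑ w : V, D c w * Y ω w) ^ (K - 1) *
            (Y ω v - ∑ u : ↥C, delta v C A S D u * Y ω (u : V)) = 0 :=
  stmt_10_general r hacyc B hsupp Om hOm Sig hSig v C A hpa hOmv hA D hD hD0 S hS hinv ε hint hmean
    hindep Y hY
end

section
/- Let V be a finite set, v ∈ V, and let C₁ ⊆ A₁ ⊆ A ⊆ V ∖ {v}. Let S, D ∈ ℝ^{V×V} with D_{C₁, A∖A₁} = 0 (every entry of D with row in C₁ and column in A∖A₁ is zero), and suppose (I−D)_{C₁,A₁} S_{A₁,C₁} is invertible. Then (I−D)_{C₁,A} S_{A,C₁} = (I−D)_{C₁,A₁} S_{A₁,C₁}, (I−D)_{C₁,A} S_{A,v} = (I−D)_{C₁,A₁} S_{A₁,v}, and consequently δ_v(C₁, A, S, D) = δ_v(C₁, A₁, S, D). -/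
open Matrix

/-! Since `C₁ ⊆ A₁`, the block `(I − D)_{C₁, A ∖ A₁}` is off the diagonal, hence equals
`-D_{C₁, A ∖ A₁} = 0`. So every product `(I − D)_{C₁,A} X_A` only sees the rows of `X` indexed by
`A₁`, and `δ_v` is built from such products only. -/

section Truncation

variable {V : Type*} [DecidableEq V] {C₁ A₁ A : Finset V} {D : Matrix V V ℝ}

theorem sum_one_sub_mul_eq_of_vanishing {c : V} (hc : c ∈ A₁) (hA₁A : A₁ ⊆ A)
    (hD0 : ∀ a ∈ A, a ∉ A₁ → D c a = 0) (g : V → ℝ) :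
    ∑ a : ↥A, (1 - D) c a * g a = ∑ a : ↥A₁, (1 - D) c a * g a := by
  rw [Finset.sum_coe_sort A (fun a => (1 - D) c a * g a),
    Finset.sum_coe_sort A₁ (fun a => (1 - D) c a * g a)]
  refine (Finset.sum_subset hA₁A fun a haA haA₁ => ?_).symm
  have hca : c ≠ a := fun h => haA₁ (h ▸ hc)
  simp [Matrix.sub_apply, one_apply_ne hca, hD0 a haA haA₁]

theorem msub_one_sub_mul_msub_eq_of_vanishing (hC₁A₁ : C₁ ⊆ A₁) (hA₁A : A₁ ⊆ A)
    (hD0 : ∀ c ∈ C₁, ∀ a ∈ A, a ∉ A₁ → D c a = 0) (S : Matrix V V ℝ) (C : Finset V) :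
    msub (1 - D) C₁ A * msub S A C = msub (1 - D) C₁ A₁ * msub S A₁ C := by
  ext c c'
  simpa [mul_apply, msub] using
    sum_one_sub_mul_eq_of_vanishing (hC₁A₁ c.2) hA₁A (hD0 c c.2) (fun a => S a c')

theorem msub_one_sub_mulVec_eq_of_vanishing (hC₁A₁ : C₁ ⊆ A₁) (hA₁A : A₁ ⊆ A)
    (hD0 : ∀ c ∈ C₁, ∀ a ∈ A, a ∉ A₁ → D c a = 0) (g : V → ℝ) :
    (msub (1 - D) C₁ A *ᵥ fun a : ↥A => g a) = msub (1 - D) C₁ A₁ *ᵥ fun a : ↥A₁ => g a := by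
  ext c
  simpa [mulVec, dotProduct, msub] using
    sum_one_sub_mul_eq_of_vanishing (hC₁A₁ c.2) hA₁A (hD0 c c.2) g

end Truncation

theorem stmt_11_general {V : Type*} [Fintype V] [DecidableEq V]
    (v : V) (C₁ A₁ A : Finset V)
    (hC₁A₁ : C₁ ⊆ A₁) (hA₁A : A₁ ⊆ A)
    (S D : Matrix V V ℝ)
    (hD0 : ∀ c ∈ C₁, ∀ a ∈ A, a ∉ A₁ → D c a = 0) :
    msub (1 - D) C₁ A * msub S A C₁ = msub (1 - D) C₁ A₁ * msub S A₁ C₁ ∧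
    (msub (1 - D) C₁ A *ᵥ fun a : ↥A => S (a : V) v) =
      (msub (1 - D) C₁ A₁ *ᵥ fun a : ↥A₁ => S (a : V) v) ∧
    delta v C₁ A S D = delta v C₁ A₁ S D := by
  have hgram := msub_one_sub_mul_msub_eq_of_vanishing hC₁A₁ hA₁A hD0 S C₁
  have hcross := msub_one_sub_mulVec_eq_of_vanishing hC₁A₁ hA₁A hD0 (fun a => S a v)
  refine ⟨hgram, hcross, ?_⟩
  rw [delta, delta, ← mulVec_mulVec, ← mulVec_mulVec, hgram, hcross]

/-- for `C₁ ⊆ A₁ ⊆ A ⊆ V ∖ {v}` and `D_{C₁, A∖A₁} = 0`, with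
`(I−D)_{C₁,A₁} S_{A₁,C₁}` invertible:
`(I−D)_{C₁,A} S_{A,C₁} = (I−D)_{C₁,A₁} S_{A₁,C₁}`,
`(I−D)_{C₁,A} S_{A,v} = (I−D)_{C₁,A₁} S_{A₁,v}`, and
`δ_v(C₁, A, S, D) = δ_v(C₁, A₁, S, D)`. -/
theorem stmt_11 {V : Type*} [Fintype V] [DecidableEq V]
    (v : V) (C₁ A₁ A : Finset V)
    (hC₁A₁ : C₁ ⊆ A₁) (hA₁A : A₁ ⊆ A) (hvA : v ∉ A)
    (S D : Matrix V V ℝ)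
    (hD0 : ∀ c ∈ C₁, ∀ a ∈ A, a ∉ A₁ → D c a = 0)
    (hinv : IsUnit (msub (1 - D) C₁ A₁ * msub S A₁ C₁)) :
    msub (1 - D) C₁ A * msub S A C₁ = msub (1 - D) C₁ A₁ * msub S A₁ C₁ ∧
    (msub (1 - D) C₁ A *ᵥ fun a : ↥A => S (a : V) v) =
      (msub (1 - D) C₁ A₁ *ᵥ fun a : ↥A₁ => S (a : V) v) ∧
    delta v C₁ A S D = delta v C₁ A₁ S D :=
  stmt_11_general v C₁ A₁ A hC₁A₁ hA₁A S D hD0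
end

section
/- Let G = (V, E) be a finite directed acyclic graph, v ∈ V, C ⊆ V ∖ {v}, and q ∈ C with (q,v) ∈ E (q is a parent of v). For β ∈ ℝ^E define B(β) ∈ ℝ^{V×V} by B(β)_{wz} = β_{(z,w)} if (z,w) ∈ E and 0 otherwise, and let B̃(β)(C ∪ {v}) denote the corresponding marginal direct effects matrix. Then the set {β ∈ ℝ^E : B̃(β)(C ∪ {v})_{vq} = 0} has Lebesgue measure zero in ℝ^E. -/
/-!
Let `S` be the `(C ∪ {v})`-principal submatrix of `(I - B(β))⁻¹`, so that `B̃ = I - S⁻¹`. Sorting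
the vertices by a height function of the DAG makes `B(β)` strictly lower triangular, hence `S` is
unipotent and `B̃_{vq}` vanishes exactly when the adjugate entry `(adj S)_{vq}` does. With the edge
weights as indeterminates that entry is a polynomial in `β`, and it is not the zero polynomial: at
the weight vector that is `1` on the edge `q → v` and `0` elsewhere, `B̃_{vq} = 1`. The zero set of
a nonzero real polynomial is Lebesgue-null, by induction on the number of variables and Fubini.
-/

open Matrix MeasureTheory

open Finset

namespace MvPolynomial

variable {σ τ : Type*} [Fintype σ] [Fintype τ]

theorem volume_zeroSet_eq_zero_of_equiv (e : σ ≃ τ)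
    (h : ∀ P : MvPolynomial σ ℝ, P ≠ 0 → volume {x : σ → ℝ | eval x P = 0} = 0)
    (Q : MvPolynomial τ ℝ) (hQ : Q ≠ 0) : volume {y : τ → ℝ | eval y Q = 0} = 0 := by
  have hP : rename e.symm Q ≠ 0 :=
    (map_ne_zero_iff _ (rename_injective _ e.symm.injective)).mpr hQ
  rw [← h _ hP,
    ← (volume_measurePreserving_piCongrLeft (fun _ ↦ ℝ) e).symm.measure_preimage_equiv]
  congr 1
  ext y
  simp only [Set.mem_preimage, Set.mem_ofPred_eq, eval_rename]
  change _ ↔ eval (fun x ↦ y (e (e.symm x))) Q = 0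
  simp

theorem volume_zeroSet_eq_zero_option
    (h : ∀ P : MvPolynomial σ ℝ, P ≠ 0 → volume {x : σ → ℝ | eval x P = 0} = 0)
    (P : MvPolynomial (Option σ) ℝ) (hP : P ≠ 0) :
    volume {x : Option σ → ℝ | eval x P = 0} = 0 := by
  set p := optionEquivLeft ℝ σ P
  have hp : p ≠ 0 := (map_ne_zero_iff _ (optionEquivLeft ℝ σ).injective).mpr hP
  let e := MeasurableEquiv.piOptionEquivProd fun _ : Option σ ↦ ℝ
  have he : MeasurePreserving e.symm (volume.prod volume) volume :=
    ⟨by fun_prop, Measure.pi_map_piOptionEquivProd fun _ ↦ volume⟩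
  have he_apply (s : σ → ℝ) (y : ℝ) : e.symm (s, y) = fun x ↦ Option.elim x y s := by
    ext x; cases x <;> rfl
  rw [← he.measure_preimage_equiv, Measure.measure_prod_null]
  · filter_upwards [compl_mem_ae_iff.2 (h _ (Polynomial.leadingCoeff_ne_zero.2 hp))] with s hs
    have hps : p.map (eval s) ≠ 0 := fun h0 ↦ hs <| by
      rw [Set.mem_ofPred_eq, Polynomial.leadingCoeff, ← Polynomial.coeff_map, h0,
        Polynomial.coeff_zero]
    refine Set.Finite.measure_zero ((Polynomial.finite_setOfPred_isRoot hps).subset ?_) _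
    intro y hy
    simpa [he_apply, optionEquivLeft_elim_eval] using hy
  · exact e.symm.measurable (continuous_eval P |>.measurable (measurableSet_singleton 0))

theorem volume_zeroSet_eq_zero (P : MvPolynomial σ ℝ) (hP : P ≠ 0) :
    volume {x : σ → ℝ | eval x P = 0} = 0 := by
  revert P
  refine Fintype.induction_empty_option
    (P := fun σ _ ↦ ∀ P : MvPolynomial σ ℝ, P ≠ 0 → volume {x : σ → ℝ | eval x P = 0} = 0)
    (fun α β _ e ih ↦ ?_) ?_ (fun α _ ih ↦ volume_zeroSet_eq_zero_option ih) σ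
  · let := Fintype.ofEquiv β e.symm
    exact volume_zeroSet_eq_zero_of_equiv e ih
  · intro P hP
    rw [eq_C_of_isEmpty P] at hP ⊢
    simp_all

end MvPolynomial

theorem Relation.exists_nat_height_of_acyclic {α : Type*} [Finite α] {r : α → α → Prop}
    (hr : ∀ a, ¬ TransGen r a a) : ∃ h : α → ℕ, ∀ a b, r a b → h a < h b := by
  classical
  have := Fintype.ofFinite α
  refine ⟨fun a ↦ #{x | TransGen r x a}, fun a b hab ↦ card_lt_card ?_⟩
  refine (ssubset_iff_of_subset fun x hx ↦ ?_).2 ⟨a, ?_, ?_⟩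
  · simp only [mem_filter, mem_univ, true_and] at hx ⊢
    exact hx.tail hab
  · simpa using TransGen.single hab
  · simpa using hr a

namespace Matrix

variable {ι κ R : Type*}

section CommRing

variable [Fintype ι] [DecidableEq ι] [CommRing R]

theorem inv_map_eq_map_inv {S : Type*} [CommRing S] (f : R →+* S) {M : Matrix ι ι R}
    (hM : IsUnit M) : (M.map f)⁻¹ = M⁻¹.map f :=
  inv_eq_right_inv <| by
    rw [← Matrix.map_mul, mul_nonsing_inv _ ((isUnit_iff_isUnit_det M).1 hM),
      Matrix.map_one _ f.map_zero f.map_one]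

theorem one_sub_inv_apply_eq_zero_iff {M : Matrix ι ι R} (hM : IsUnit M.det) {i j : ι}
    (hij : i ≠ j) : (1 - M⁻¹) i j = 0 ↔ M.adjugate i j = 0 := by
  rw [sub_apply, one_apply_ne hij, zero_sub, neg_eq_zero, inv_def, smul_apply, smul_eq_mul,
    hM.ringInverse.mul_right_eq_zero]

theorem inv_one_sub_of_mul_self_eq_zero {N : Matrix ι ι R} (hN : N * N = 0) :
    (1 - N)⁻¹ = 1 + N :=
  inv_eq_right_inv <| by rw [sub_mul, mul_add, mul_add, hN]; simp

end CommRing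

/-- `M i j` can be nonzero only if `h j < h i`: `M` is strictly lower triangular once the indices
are sorted by `h`. -/
def IsStrictLowerAlong [Zero R] (h : ι → ℕ) (M : Matrix ι ι R) : Prop :=
  ∀ i j, h i ≤ h j → M i j = 0

namespace IsStrictLowerAlong

variable {h : ι → ℕ}

theorem submatrix [Zero R] {M : Matrix ι ι R} (hM : IsStrictLowerAlong h M) (f : κ → ι) :
    IsStrictLowerAlong (h ∘ f) (M.submatrix f f) :=
  fun i j ↦ hM (f i) (f j)

variable [Fintype ι] [DecidableEq ι]

section Semiring

variable [Semiring R] {M : Matrix ι ι R}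

theorem pow_apply_eq_zero (hM : IsStrictLowerAlong h M) (k : ℕ) {i j : ι}
    (hij : h i < h j + k) : (M ^ k) i j = 0 := by
  induction k generalizing j with
  | zero => exact one_apply_ne (by rintro rfl; omega)
  | succ k ih =>
    rw [pow_succ, mul_apply]
    refine sum_eq_zero fun u _ ↦ ?_
    rcases lt_or_ge (h i) (h u + k) with hu | hu
    · rw [ih hu, zero_mul]
    · rw [hM u j (by omega), mul_zero]

theorem pow_sup_add_one_eq_zero (hM : IsStrictLowerAlong h M) : M ^ (univ.sup h + 1) = 0 := by
  ext i j
  exact hM.pow_apply_eq_zero _ (by have := le_sup (f := h) (mem_univ i); omega)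

theorem isNilpotent (hM : IsStrictLowerAlong h M) : IsNilpotent M :=
  ⟨_, hM.pow_sup_add_one_eq_zero⟩

end Semiring

theorem geom_sum_sub_one [Ring R] {M : Matrix ι ι R} (hM : IsStrictLowerAlong h M) (n : ℕ) :
    IsStrictLowerAlong h (∑ k ∈ range (n + 1), M ^ k - 1) := by
  intro i j hij
  rw [sum_range_succ', pow_zero, add_sub_cancel_right, sum_apply]
  exact sum_eq_zero fun k _ ↦ hM.pow_apply_eq_zero (k + 1) (by omega)

variable [CommRing R] {M : Matrix ι ι R}

theorem inv_one_sub_sub_one (hM : IsStrictLowerAlong h M) :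
    IsStrictLowerAlong h ((1 - M)⁻¹ - 1) := by
  have hinv : (1 - M)⁻¹ = ∑ k ∈ range (univ.sup h + 1), M ^ k :=
    inv_eq_right_inv (by rw [mul_neg_geom_sum, hM.pow_sup_add_one_eq_zero, sub_zero])
  rw [hinv]
  exact hM.geom_sum_sub_one _

theorem isUnit_det_submatrix_inv_one_sub (hM : IsStrictLowerAlong h M) [Fintype κ]
    [DecidableEq κ] {f : κ → ι} (hf : Function.Injective f) :
    IsUnit ((1 - M)⁻¹.submatrix f f).det := by
  have hsplit : (1 - M)⁻¹.submatrix f f = 1 + ((1 - M)⁻¹ - 1).submatrix f f := by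
    ext i j
    simp [← submatrix_one f hf]
  rw [hsplit, ← isUnit_iff_isUnit_det]
  exact (hM.inv_one_sub_sub_one.submatrix f).isNilpotent.isUnit_one_add

end IsStrictLowerAlong

end Matrix

section EdgeMatrix

open MvPolynomial

variable {V : Type*} [DecidableEq V] (E : Finset (V × V))

noncomputable def edgeMatrixPoly : Matrix V V (MvPolynomial E ℝ) :=
  fun w z ↦ if h : (z, w) ∈ E then X ⟨(z, w), h⟩ else 0

theorem map_edgeMatrixPoly (β : E → ℝ) :
    (edgeMatrixPoly E).map (eval β) = edgeMatrix E β := by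
  ext w z
  by_cases h : (z, w) ∈ E <;> simp [edgeMatrixPoly, edgeMatrix, h]

variable {E}

theorem isStrictLowerAlong_edgeMatrixPoly {h : V → ℕ}
    (hE : ∀ z w, (z, w) ∈ E → h z < h w) : (edgeMatrixPoly E).IsStrictLowerAlong h :=
  fun w z hwz ↦ dif_neg fun hzw ↦ (hE z w hzw).not_ge hwz

variable [Fintype V]

/-- `((I - B)⁻¹)_{A,A}` with the edge weights as indeterminates. -/
noncomputable def marginalTotalEffectsPoly (E : Finset (V × V)) (A : Finset V) :
    Matrix A A (MvPolynomial E ℝ) :=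
  (1 - edgeMatrixPoly E)⁻¹.submatrix (↑) (↑)

theorem btilde_edgeMatrix {h : V → ℕ} (hE : ∀ z w, (z, w) ∈ E → h z < h w) (A : Finset V)
    (β : E → ℝ) :
    Btilde (edgeMatrix E β) A = 1 - ((marginalTotalEffectsPoly E A).map (eval β))⁻¹ := by
  have hunit := (isStrictLowerAlong_edgeMatrixPoly hE).isNilpotent.isUnit_one_sub
  have hmap : 1 - edgeMatrix E β = (1 - edgeMatrixPoly E).map (eval β) := by
    rw [Matrix.map_sub _ (map_sub _), Matrix.map_one _ (map_zero _) (map_one _),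
      map_edgeMatrixPoly]
  rw [Btilde, msub, hmap, Matrix.inv_map_eq_map_inv _ hunit, submatrix_map]
  rfl

theorem btilde_edgeMatrix_apply_eq_zero_iff {h : V → ℕ} (hE : ∀ z w, (z, w) ∈ E → h z < h w)
    {A : Finset V} {i j : A} (hij : i ≠ j) (β : E → ℝ) :
    Btilde (edgeMatrix E β) A i j = 0 ↔
      eval β ((marginalTotalEffectsPoly E A).adjugate i j) = 0 := by
  have hdet : IsUnit (marginalTotalEffectsPoly E A).det :=
    (isStrictLowerAlong_edgeMatrixPoly hE).isUnit_det_submatrix_inv_one_sub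
      Subtype.val_injective
  rw [btilde_edgeMatrix hE, Matrix.one_sub_inv_apply_eq_zero_iff _ hij,
    ← RingHom.mapMatrix_apply, ← RingHom.map_adjugate]
  · rfl
  · rw [← RingHom.mapMatrix_apply, ← RingHom.map_det]
    exact hdet.map _

theorem btilde_edgeMatrix_single_apply {q v : V} (hqv : (q, v) ∈ E) (hvq : v ≠ q)
    {A : Finset V} (hv : v ∈ A) (hq : q ∈ A) :
    Btilde (edgeMatrix E (Pi.single ⟨(q, v), hqv⟩ 1)) A ⟨v, hv⟩ ⟨q, hq⟩ = 1 := by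
  have hB : edgeMatrix E (Pi.single ⟨(q, v), hqv⟩ 1) = single v q 1 := by
    ext w z
    by_cases h : (z, w) ∈ E
    · simp only [edgeMatrix, h, dite_true, Pi.single_apply, single_apply, Subtype.mk.injEq,
        Prod.mk.injEq]
      grind
    · simp only [edgeMatrix, h, dite_false, single_apply]
      grind
  have hvq' : (⟨v, hv⟩ : A) ≠ ⟨q, hq⟩ := ne_of_apply_ne Subtype.val hvq
  have hsub : msub (1 + single v q 1) A A = 1 + single ⟨v, hv⟩ ⟨q, hq⟩ 1 := by
    ext ⟨i, hi⟩ ⟨j, hj⟩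
    simp [msub, one_apply, single_apply]
  rw [Btilde, hB, inv_one_sub_of_mul_self_eq_zero (single_mul_single_of_ne 1 v q v hvq.symm 1),
    hsub, ← sub_neg_eq_add, inv_one_sub_of_mul_self_eq_zero (by
      rw [neg_mul_neg, single_mul_single_of_ne 1 _ _ _ hvq'.symm 1])]
  simp

end EdgeMatrix

/-- For a finite DAG `(V, E)`, `v ∉ C`, and a parent `q ∈ C` of `v`
(`(q,v) ∈ E`), the set of edge-weight vectors `β ∈ ℝ^E` for which the marginal direct
effect `B̃(β)(C ∪ {v})_{vq}` vanishes has Lebesgue measure zero. -/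
theorem stmt_14 {V : Type*} [Fintype V] [DecidableEq V]
    (E : Finset (V × V))
    (hacyc : ∀ v : V, ¬ Relation.TransGen (fun a b => (a, b) ∈ E) v v)
    (v : V) (C : Finset V) (hvC : v ∉ C)
    (q : V) (hq : q ∈ C) (hqv : (q, v) ∈ E) :
    volume {β : ↥E → ℝ |
      Btilde (edgeMatrix E β) (insert v C)
        ⟨v, Finset.mem_insert_self v C⟩ ⟨q, Finset.mem_insert_of_mem hq⟩ = 0} = 0 := by
  obtain ⟨h, hE⟩ := Relation.exists_nat_height_of_acyclic hacyc
  have hvq : v ≠ q := fun hvq ↦ hvC (hvq ▸ hq)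
  have hvq' : (⟨v, mem_insert_self v C⟩ : ↥(insert v C)) ≠ ⟨q, mem_insert_of_mem hq⟩ :=
    ne_of_apply_ne Subtype.val hvq
  simp_rw [btilde_edgeMatrix_apply_eq_zero_iff hE hvq']
  refine MvPolynomial.volume_zeroSet_eq_zero _
    (ne_of_apply_ne (MvPolynomial.eval (Pi.single ⟨(q, v), hqv⟩ 1)) ?_)
  rw [map_zero, Ne, ← btilde_edgeMatrix_apply_eq_zero_iff hE hvq',
    btilde_edgeMatrix_single_apply hqv hvq]
  exact one_ne_zero
end

section
/- Let V be a finite set, E ⊆ V × V an acyclic relation, B ∈ ℝ^{V×V} supported on E, and ε an integrable random vector on a probability space; set Y = (I−B)^{-1} ε. Then for every c ∈ V, Y_c = Σ_{s ∈ An(c)} [(I−B)^{-1}]_{cs} ε_s almost surely. Moreover, if v ∈ V is such that the random vector (ε_s)_{s∈An(c)} is independent of ε_v, E[ε_v] = 0, and E[|Y_c ε_v|] < ∞, then Y_c is independent of ε_v and E[Y_c ε_v] = 0. -/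
/-!
Rank the vertices by their number of strict ancestors. Every edge raises the rank, so a nonzero
entry `(B ^ k) c s` comes from a path `s → ⋯ → c` of length `k` and forces `rank s + k ≤ rank c`;
hence `B` is nilpotent, `(1 - B)⁻¹ = ∑_{k < N} B ^ k`, and `[(1 - B)⁻¹]_{cs} = 0` unless
`s ∈ An(c)`. This exhibits `Y_c` as a linear function of `(ε_s)_{s ∈ An(c)}`, so `Y_c` inherits
the independence from `ε_v`, and `E[Y_c ε_v] = E[Y_c] E[ε_v] = 0`.
-/

open Matrix MeasureTheory ProbabilityTheory Finset

open scoped Classical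

noncomputable def ancestorCount {V : Type*} [Fintype V] (r : V → V → Prop) (v : V) : ℕ :=
  #{u | Relation.TransGen r u v}

section Acyclic

variable {V : Type*} [Fintype V] {r : V → V → Prop}

lemma ancestorCount_lt_of_rel (hacyc : ∀ v, ¬ Relation.TransGen r v v) {u v : V} (huv : r u v) :
    ancestorCount r u < ancestorCount r v := by
  refine card_lt_card ⟨fun w hw => ?_, fun hsub => ?_⟩
  · simp only [mem_filter, mem_univ, true_and] at hw ⊢
    exact hw.tail huv
  · have hu : u ∈ ({w | Relation.TransGen r w v} : Finset V) := by simpa using .single huv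
    exact hacyc u (by simpa using hsub hu)

lemma ancestorCount_lt_card_add_one (r : V → V → Prop) (v : V) :
    ancestorCount r v < Fintype.card V + 1 :=
  Nat.lt_succ_of_le (card_le_univ _)

end Acyclic

namespace Matrix

variable {V R : Type*} [Fintype V] {r : V → V → Prop}

lemma mulVec_apply_eq_sum_filter [NonUnitalNonAssocSemiring R] {M : Matrix V V R} {c : V}
    {p : V → Prop} [DecidablePred p] (hM : ∀ s, ¬ p s → M c s = 0) (x : V → R) :
    (M *ᵥ x) c = ∑ s ∈ univ.filter p, M c s * x s := by
  refine (sum_filter_of_ne fun s _ h => ?_).symm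
  by_contra hs
  simp [hM s hs] at h

variable [DecidableEq V]

section Semiring

variable [Semiring R] {B : Matrix V V R}

lemma eq_of_pow_zero_apply_ne_zero {c s : V} (h : (B ^ 0) c s ≠ 0) : c = s := by
  by_contra hcs
  exact h (by rw [pow_zero, one_apply_ne hcs])

lemma exists_rel_of_pow_succ_apply_ne_zero (hB : ∀ u v, B v u ≠ 0 → r u v) {k : ℕ} {c s : V}
    (h : (B ^ (k + 1)) c s ≠ 0) : ∃ u, (B ^ k) c u ≠ 0 ∧ r s u := by
  rw [pow_succ, mul_apply] at h
  obtain ⟨u, -, hu⟩ := exists_ne_zero_of_sum_ne_zero h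
  exact ⟨u, left_ne_zero_of_mul hu, hB s u (right_ne_zero_of_mul hu)⟩

lemma reflTransGen_of_pow_apply_ne_zero (hB : ∀ u v, B v u ≠ 0 → r u v) :
    ∀ {k : ℕ} {c s : V}, (B ^ k) c s ≠ 0 → Relation.ReflTransGen r s c
  | 0, _, _, h => by
    obtain rfl := eq_of_pow_zero_apply_ne_zero h
    exact .refl
  | _ + 1, _, _, h => by
    obtain ⟨u, hu, hsu⟩ := exists_rel_of_pow_succ_apply_ne_zero hB h
    exact .head hsu (reflTransGen_of_pow_apply_ne_zero hB hu)

lemma add_le_of_pow_apply_ne_zero (hB : ∀ u v, B v u ≠ 0 → r u v) {f : V → ℕ}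
    (hf : ∀ u v, r u v → f u < f v) :
    ∀ {k : ℕ} {c s : V}, (B ^ k) c s ≠ 0 → f s + k ≤ f c
  | 0, _, _, h => by
    obtain rfl := eq_of_pow_zero_apply_ne_zero h
    exact le_refl _
  | _ + 1, _, _, h => by
    obtain ⟨u, hu, hsu⟩ := exists_rel_of_pow_succ_apply_ne_zero hB h
    have := hf _ _ hsu
    have := add_le_of_pow_apply_ne_zero hB hf hu
    omega

lemma pow_eq_zero_of_rel_lt (hB : ∀ u v, B v u ≠ 0 → r u v) {f : V → ℕ}
    (hf : ∀ u v, r u v → f u < f v) {N : ℕ} (hN : ∀ v, f v < N) : B ^ N = 0 := by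
  ext c s
  by_contra h
  have := add_le_of_pow_apply_ne_zero hB hf h
  have := hN c
  omega

lemma pow_card_add_one_eq_zero_of_acyclic (hB : ∀ u v, B v u ≠ 0 → r u v)
    (hacyc : ∀ v, ¬ Relation.TransGen r v v) : B ^ (Fintype.card V + 1) = 0 :=
  pow_eq_zero_of_rel_lt hB (fun _ _ => ancestorCount_lt_of_rel hacyc)
    (ancestorCount_lt_card_add_one r)

end Semiring

section CommRing

variable [CommRing R] {B : Matrix V V R}

lemma inv_one_sub_eq_sum_range_pow {N : ℕ} (hN : B ^ N = 0) :
    (1 - B)⁻¹ = ∑ i ∈ range N, B ^ i :=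
  inv_eq_right_inv (by rw [mul_neg_geom_sum, hN, sub_zero])

lemma inv_one_sub_apply_eq_zero_of_not_reflTransGen (hB : ∀ u v, B v u ≠ 0 → r u v)
    (hacyc : ∀ v, ¬ Relation.TransGen r v v) {c s : V} (hsc : ¬ Relation.ReflTransGen r s c) :
    (1 - B)⁻¹ c s = 0 := by
  rw [inv_one_sub_eq_sum_range_pow (pow_card_add_one_eq_zero_of_acyclic hB hacyc), sum_apply]
  exact sum_eq_zero fun i _ => by_contra fun h => hsc (reflTransGen_of_pow_apply_ne_zero hB h)

end CommRing

end Matrix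

theorem stmt_16_general {V : Type*} [Fintype V] [DecidableEq V]
    (r : V → V → Prop) (hacyc : ∀ v : V, ¬ Relation.TransGen r v v)
    (B : Matrix V V ℝ) (hsupp : ∀ u v : V, B v u ≠ 0 → r u v)
    {Ω : Type*} [MeasureSpace Ω]
    (ε : Ω → V → ℝ)
    (hint : ∀ w : V, Integrable fun ω => ε ω w)
    (Y : Ω → V → ℝ) (hY : ∀ ω, Y ω = (1 - B)⁻¹ *ᵥ ε ω) :
    (∀ c : V, ∀ᵐ ω, Y ω c =
        ∑ s ∈ Finset.univ.filter (fun s => Relation.ReflTransGen r s c),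
          (1 - B)⁻¹ c s * ε ω s) ∧
    ∀ c v : V,
      IndepFun (fun ω => fun s : {s : V // Relation.ReflTransGen r s c} => ε ω (s : V))
        (fun ω => ε ω v) volume →
      (∫ ω, ε ω v) = 0 →
      Integrable (fun ω => Y ω c * ε ω v) →
      IndepFun (fun ω => Y ω c) (fun ω => ε ω v) volume ∧
      (∫ ω, Y ω c * ε ω v) = 0 := by
  have hY_apply (c : V) (ω : Ω) : Y ω c = ∑ s ∈ univ.filter (fun s => Relation.ReflTransGen r s c),
      (1 - B)⁻¹ c s * ε ω s := by
    rw [hY]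
    exact mulVec_apply_eq_sum_filter
      (fun _ => inv_one_sub_apply_eq_zero_of_not_reflTransGen hsupp hacyc) _
  refine ⟨fun c => .of_forall (hY_apply c), fun c v hindep hmean _ => ?_⟩
  have hY_comp : (fun ω => Y ω c) =
      (fun x : {s // Relation.ReflTransGen r s c} → ℝ =>
        ∑ s : {s // Relation.ReflTransGen r s c}, (1 - B)⁻¹ c s * x s) ∘ fun ω s => ε ω s := by
    funext ω
    rw [hY_apply, Function.comp_apply]
    exact sum_subtype _ (fun _ => by simp) _
  have hindepY : IndepFun (fun ω => Y ω c) (fun ω => ε ω v) volume := by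
    rw [hY_comp]
    exact hindep.comp (by fun_prop) measurable_id
  have hmeasY : AEStronglyMeasurable (fun ω => Y ω c) := by
    simp_rw [hY_apply]
    exact (integrable_finsetSum _ fun s _ => (hint s).const_mul _).aestronglyMeasurable
  refine ⟨hindepY, ?_⟩
  rw [hindepY.integral_fun_mul_eq_mul_integral hmeasY (hint v).aestronglyMeasurable, hmean,
    mul_zero]

/-- With `B` supported on an acyclic relation, `ε` integrable, and
`Y = (I−B)⁻¹ ε`: each `Y_c` equals `Σ_{s ∈ An(c)} [(I−B)⁻¹]_{cs} ε_s` almost surely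
(where `An(c) = {s | s = c or there is a directed path from s to c}` is the set of `s`
with `Relation.ReflTransGen r s c`); moreover, if `(ε_s)_{s∈An(c)}` is independent of
`ε_v`, `E[ε_v] = 0`, and `E[|Y_c ε_v|] < ∞`, then `Y_c` is independent of `ε_v`
and `E[Y_c ε_v] = 0`. -/
theorem stmt_16 {V : Type*} [Fintype V] [DecidableEq V]
    (r : V → V → Prop) (hacyc : ∀ v : V, ¬ Relation.TransGen r v v)
    (B : Matrix V V ℝ) (hsupp : ∀ u v : V, B v u ≠ 0 → r u v)
    {Ω : Type*} [MeasureSpace Ω] [IsProbabilityMeasure (volume : Measure Ω)]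
    (ε : Ω → V → ℝ)
    (hint : ∀ w : V, Integrable fun ω => ε ω w)
    (Y : Ω → V → ℝ) (hY : ∀ ω, Y ω = (1 - B)⁻¹ *ᵥ ε ω) :
    (∀ c : V, ∀ᵐ ω, Y ω c =
        ∑ s ∈ Finset.univ.filter (fun s => Relation.ReflTransGen r s c),
          (1 - B)⁻¹ c s * ε ω s) ∧
    ∀ c v : V,
      IndepFun (fun ω => fun s : {s : V // Relation.ReflTransGen r s c} => ε ω (s : V))
        (fun ω => ε ω v) volume →
      (∫ ω, ε ω v) = 0 →
      Integrable (fun ω => Y ω c * ε ω v) →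
      IndepFun (fun ω => Y ω c) (fun ω => ε ω v) volume ∧
      (∫ ω, Y ω c * ε ω v) = 0 :=
  stmt_16_general r hacyc B hsupp ε hint Y hY
end
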